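/- arXiv:1904.09748 — 6 statements merged into one kernel-verified Lean document; each statement's English description precedes it below -/
import Mathlib

section
/- Fix an integer N ≥ 1 and let A be the N×N natural-number matrix, indexed by i, j ∈ {1, …, N}, with A_{ij} = j!·(j−1)! / (i!·(i−1)!·(j−i)!) when i ≤ j and A_{ij} = 0 when i > j (the Lah numbers). Then for every integer m ≥ 1 and all i ≤ j, the (i,j)-entry of the matrix power A^m equals m^{j−i} · A_{ij} (and the entries with i > j are 0). -/
/-!
Let `L_a` be the upper-triangular matrix with entries `a^(j-i) · L(j,i)`. The Lah numbers satisfy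
`L(k,i) · L(j,k) = L(j,i) · C(j-i, k-i)`, so the `(i,j)` entry of `L_a L_b` is
`L(j,i) · ∑ₖ C(j-i, k-i) a^(k-i) b^(j-k) = (a+b)^(j-i) · L(j,i)` by the binomial theorem.
Thus `a ↦ L_a` turns addition into matrix multiplication, with `L_0 = 1`, and `A^m = L_1^m = L_m`.
-/

open Set

def lah (j i : ℕ) : ℕ :=
  j.factorial * (j - 1).factorial / (i.factorial * (i - 1).factorial * (j - i).factorial)

theorem lah_succ_succ_eq_descFactorial_mul_choose {i j : ℕ} (h : i ≤ j) :
    lah (j + 1) (i + 1) = (j + 1).descFactorial (j - i) * j.choose i := by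
  have hfact : (i + 1).factorial * (j + 1).descFactorial (j - i) = (j + 1).factorial := by
    simpa [show j + 1 - (j - i) = i + 1 by omega] using
      Nat.factorial_mul_descFactorial (n := j + 1) (k := j - i) (by omega)
  rw [lah, Nat.add_sub_cancel, Nat.add_sub_cancel, Nat.add_sub_add_right]
  refine Nat.div_eq_of_eq_mul_left (by positivity) ?_
  rw [← hfact, ← Nat.choose_mul_factorial_mul_factorial h]
  ring

theorem lah_self (i : ℕ) : lah (i + 1) (i + 1) = 1 := by
  simp [lah_succ_succ_eq_descFactorial_mul_choose le_rfl]

theorem lah_mul_lah {i j k : ℕ} (hik : i ≤ k) (hkj : k ≤ j) :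
    lah (k + 1) (i + 1) * lah (j + 1) (k + 1) = lah (j + 1) (i + 1) * (j - i).choose (k - i) := by
  have hdesc : (k + 1).descFactorial (k - i) * (j + 1).descFactorial (j - k) =
      (j + 1).descFactorial (j - i) := by
    simpa [show j + 1 - (j - k) = k + 1 by omega, show j - i - (j - k) = k - i by omega] using
      Nat.descFactorial_mul_descFactorial (n := j + 1) (k := j - k) (m := j - i) (by omega)
  rw [lah_succ_succ_eq_descFactorial_mul_choose hik, lah_succ_succ_eq_descFactorial_mul_choose hkj,
    lah_succ_succ_eq_descFactorial_mul_choose (hik.trans hkj), ← hdesc]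
  calc _ = (k + 1).descFactorial (k - i) * (j + 1).descFactorial (j - k) *
        (j.choose k * k.choose i) := by ring
    _ = _ := by rw [Nat.choose_mul hik]; ring

section

variable {R : Type*} [CommSemiring R]

theorem sum_pow_mul_lah_mul_pow_mul_lah (a b : R) {i j : ℕ} (h : i ≤ j) :
    ∑ k ∈ Finset.Icc i j,
        (a ^ (k - i) * lah (k + 1) (i + 1)) * (b ^ (j - k) * lah (j + 1) (k + 1)) =
      (a + b) ^ (j - i) * lah (j + 1) (i + 1) := by
  rw [add_pow, Finset.sum_mul, ← Finset.Ico_add_one_right_eq_Icc, Finset.sum_Ico_eq_sum_range,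
    show j + 1 - i = j - i + 1 by omega]
  refine Finset.sum_congr rfl fun t ht => ?_
  have ht : t ≤ j - i := Nat.lt_succ_iff.mp (Finset.mem_range.mp ht)
  have hprod := lah_mul_lah (Nat.le_add_right i t) (show i + t ≤ j by omega)
  rw [Nat.add_sub_cancel_left] at hprod
  calc a ^ (i + t - i) * lah (i + t + 1) (i + 1) * (b ^ (j - (i + t)) * lah (j + 1) (i + t + 1))
      = a ^ t * b ^ (j - i - t) *
          ((lah (i + t + 1) (i + 1) * lah (j + 1) (i + t + 1) : ℕ) : R) := by
        rw [Nat.add_sub_cancel_left, Nat.sub_sub]; push_cast; ring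
    _ = _ := by rw [hprod]; push_cast; ring

def lahEntry (a : R) (i j : ℕ) : R :=
  if i ≤ j then a ^ (j - i) * lah (j + 1) (i + 1) else 0

theorem sum_lahEntry_mul_lahEntry (a b : R) (i j : ℕ) :
    ∑ k ∈ Finset.Icc i j, lahEntry a i k * lahEntry b k j = lahEntry (a + b) i j := by
  rcases le_or_gt i j with h | h
  · rw [lahEntry, if_pos h, ← sum_pow_mul_lah_mul_pow_mul_lah a b h]
    refine Finset.sum_congr rfl fun k hk => ?_
    obtain ⟨hik, hkj⟩ := Finset.mem_Icc.mp hk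
    rw [lahEntry, lahEntry, if_pos hik, if_pos hkj]
  · rw [Finset.Icc_eq_empty_of_lt h, Finset.sum_empty, lahEntry, if_neg h.not_ge]

variable (R) in
/-- Row and column `i : Fin N` stand for the paper's index `i + 1`. -/
def lahMatrix (N : ℕ) (a : R) : Matrix (Fin N) (Fin N) R :=
  Matrix.of fun i j => lahEntry a i j

theorem lahMatrix_mul (N : ℕ) (a b : R) :
    lahMatrix R N a * lahMatrix R N b = lahMatrix R N (a + b) := by
  ext i j
  have hsupp : Finset.Icc (i : ℕ) j ⊆ Finset.range N := fun k hk =>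
    Finset.mem_range.mpr ((Finset.mem_Icc.mp hk).2.trans_lt j.isLt)
  have hzero : ∀ k ∈ Finset.range N, k ∉ Finset.Icc (i : ℕ) j →
      lahEntry a i k * lahEntry b k j = 0 := by
    intro k _ hk
    rcases not_and_or.mp (hk ∘ Finset.mem_Icc.mpr) with hik | hkj
    · rw [lahEntry, if_neg hik, zero_mul]
    · simp only [lahEntry, if_neg hkj, mul_zero]
  simp only [lahMatrix, Matrix.mul_apply, Matrix.of_apply]
  rw [Fin.sum_univ_eq_sum_range (fun k => lahEntry a i k * lahEntry b k j),
    ← Finset.sum_subset hsupp hzero, sum_lahEntry_mul_lahEntry]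

variable (R) in
theorem lahMatrix_zero (N : ℕ) : lahMatrix R N 0 = 1 := by
  ext i j
  rw [lahMatrix, Matrix.of_apply, Matrix.one_apply, lahEntry]
  rcases lt_trichotomy i j with h | rfl | h
  · rw [if_pos (Fin.le_def.mp h.le), if_neg h.ne, zero_pow (Nat.sub_ne_zero_of_lt h), zero_mul]
  · simp [lah_self]
  · rw [if_neg (Fin.lt_def.mp h).not_ge, if_neg h.ne']

theorem lahMatrix_pow (N : ℕ) (a : R) (m : ℕ) :
    lahMatrix R N a ^ m = lahMatrix R N (m * a) := by
  induction m with
  | zero => rw [pow_zero, Nat.cast_zero, zero_mul, lahMatrix_zero]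
  | succ m ih => rw [pow_succ, ih, lahMatrix_mul, Nat.cast_succ, add_one_mul]

end

theorem lah_matrix_pow_general (N : ℕ) (m : ℕ)
    (A : Matrix (Fin N) (Fin N) ℕ)
    (hA : A = Matrix.of fun i j => if i ≤ j then lah (j.val + 1) (i.val + 1) else 0) :
    (∀ i j : Fin N, i ≤ j → (A ^ m) i j = m ^ (j.val - i.val) * A i j) ∧
      ∀ i j : Fin N, j < i → (A ^ m) i j = 0 := by
  have hA_lah : A = lahMatrix ℕ N 1 := by
    rw [hA]
    ext i j
    simp only [lahMatrix, Matrix.of_apply, lahEntry, one_pow, one_mul, Fin.le_def, Nat.cast_id]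
  have hpow : A ^ m = lahMatrix ℕ N m := by rw [hA_lah, lahMatrix_pow, mul_one, Nat.cast_id]
  refine ⟨fun i j hij => ?_, fun i j hji => ?_⟩
  · rw [hpow, hA_lah]
    simp only [lahMatrix, Matrix.of_apply, lahEntry, if_pos (Fin.le_def.mp hij), one_pow, one_mul]
  · rw [hpow]
    simp only [lahMatrix, Matrix.of_apply, lahEntry, if_neg (Fin.lt_def.mp hji).not_ge]

/-- If `A` is the `N×N` matrix of Lah numbers `A_{ij} = lah j i` for `i ≤ j`
(and `0` for `i > j`, indices running over `{1, …, N}`), then the entries of `A^m`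
are `(A^m)_{ij} = m^(j-i) · A_{ij}` for `i ≤ j`, and `0` for `i > j`. -/
theorem lah_matrix_pow (N : ℕ) (hN : 1 ≤ N) (m : ℕ) (hm : 1 ≤ m)
    (A : Matrix (Fin N) (Fin N) ℕ)
    (hA : A = Matrix.of fun i j => if i ≤ j then lah (j.val + 1) (i.val + 1) else 0) :
    (∀ i j : Fin N, i ≤ j → (A ^ m) i j = m ^ (j.val - i.val) * A i j) ∧
      ∀ i j : Fin N, j < i → (A ^ m) i j = 0 :=
  lah_matrix_pow_general N m A hA
end

section
/- Fix an integer m ≥ 0 and let F ∈ ℚ⟦X⟧ be the formal power series whose coefficient of X^n is |L_1(C^m_n)|/n! for n ≥ 1 and 0 for n = 0, where |L_1(C^m_n)| is the number of 1-dimensional flats of the n-dimensional extended Catalan arrangement. Then (1 − m·(exp(X) − 1)) · F = exp(X) − 1 in ℚ⟦X⟧, where exp(X) denotes the exponential power series ∑_{n≥0} X^n/n!. -/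
open Set

/-- The affine hyperplane `{x : ℝⁿ | x i - x j = a}`. -/
def hyp (n : ℕ) (i j : Fin n) (a : ℤ) : Set (Fin n → ℝ) :=
  {x | x i - x j = (a : ℝ)}

/-- The extended Catalan arrangement `C^m_n`: hyperplanes `x_i - x_j = a` for
`i < j` and `-m ≤ a ≤ m`. -/
def CatalanArr (m n : ℕ) : Set (Set (Fin n → ℝ)) :=
  {H | ∃ i j : Fin n, ∃ a : ℤ, i < j ∧ -(m : ℤ) ≤ a ∧ a ≤ (m : ℤ) ∧ H = hyp n i j a}

/-- The extended Shi arrangement `S^m_n`: hyperplanes `x_i - x_j = a` for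
`i < j` and `1 - m ≤ a ≤ m`. -/
def ShiArr (m n : ℕ) : Set (Set (Fin n → ℝ)) :=
  {H | ∃ i j : Fin n, ∃ a : ℤ, 1 - (m : ℤ) ≤ a ∧ a ≤ (m : ℤ) ∧ i < j ∧ H = hyp n i j a}

/-- The flats of an arrangement: nonempty intersections of subcollections
(the empty intersection being the whole space). -/
def flats {n : ℕ} (A : Set (Set (Fin n → ℝ))) : Set (Set (Fin n → ℝ)) :=
  {F | F.Nonempty ∧ ∃ B ⊆ A, F = ⋂₀ B}

/-- The dimension of a flat, i.e. the dimension of the affine subspace it spans. -/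
noncomputable def flatDim {n : ℕ} (F : Set (Fin n → ℝ)) : ℕ :=
  Module.finrank ℝ (affineSpan ℝ F).direction

/-- The set of `k`-dimensional flats of an arrangement. -/
def Lk {n : ℕ} (A : Set (Set (Fin n → ℝ))) (k : ℕ) : Set (Set (Fin n → ℝ)) :=
  {F | F ∈ flats A ∧ flatDim F = k}

/-!
A one-dimensional flat of `C^m_n` is a line `c + ℝ (1, …, 1)`, and we normalise `c` so that
`min c = 0`. The hyperplanes cutting out the flat must link all coordinates: otherwise, adding the
indicator of a set of coordinates closed under the links would move the flat in a second
direction. Hence the coordinates of `c` are natural numbers, and every positive value lies at most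
`m` above some smaller value; conversely every such `c` gives a one-dimensional flat.
Cutting such a `c` at its maximum leaves a configuration on the `k < n` coordinates below the top
level, while the top value can be chosen in `m` ways. So the number `a_n` of such `c` satisfies
`a_n = 1 + m ∑_{k<n} C(n,k) a_k` for `n ≥ 1`, with `a_0 = 0`; this is the coefficientwise form of `(1 - m(eˣ - 1)) F = eˣ - 1`.
-/

def RelConnected {ι : Type*} (r : ι → ι → Prop) : Prop :=
  ∀ S : Set ι, (∀ i j, r i j → (i ∈ S ↔ j ∈ S)) → ∀ i j, i ∈ S → j ∈ S

namespace RelConnected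

variable {ι : Type*} {r : ι → ι → Prop}

theorem eq_of_forall_rel {β : Type*} (h : RelConnected r) {f : ι → β}
    (hf : ∀ i j, r i j → f i = f j) (i j : ι) : f i = f j :=
  (h {k | f k = f i} (fun k l hkl => by rw [mem_ofPred_eq, mem_ofPred_eq, hf k l hkl])
    i j rfl).symm

theorem exists_rel_mem_notMem (h : RelConnected r) {S : Set ι} {i j : ι} (hi : i ∈ S)
    (hj : j ∉ S) : ∃ k l, (r k l ∨ r l k) ∧ k ∈ S ∧ l ∉ S := by
  by_contra! hS
  exact hj (h S (fun k l hkl => ⟨hS k l (.inl hkl), hS l k (.inr hkl)⟩) i j hi)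

end RelConnected

theorem mem_span_one_iff {ι : Type*} {v : ι → ℝ} :
    v ∈ ℝ ∙ (1 : ι → ℝ) ↔ ∀ i j, v i = v j := by
  refine ⟨fun hv i j => ?_, fun hv => ?_⟩
  · obtain ⟨t, rfl⟩ := Submodule.mem_span_singleton.mp hv
    simp
  · rcases isEmpty_or_nonempty ι with hι | ⟨⟨i₀⟩⟩
    · simp [Subsingleton.elim v 0]
    · exact Submodule.mem_span_singleton.mpr ⟨v i₀, funext fun i => by simp [hv i₀ i]⟩

section DiagLine

variable {n : ℕ}

def diagLine (c : Fin n → ℝ) : AffineSubspace ℝ (Fin n → ℝ) :=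
  AffineSubspace.mk' c (ℝ ∙ 1)

theorem mem_diagLine {c x : Fin n → ℝ} :
    x ∈ diagLine c ↔ ∀ i j, x i - c i = x j - c j := by
  rw [diagLine, AffineSubspace.mem_mk', vsub_eq_sub, mem_span_one_iff]
  rfl

theorem flatDim_diagLine [NeZero n] (c : Fin n → ℝ) :
    flatDim (diagLine c : Set (Fin n → ℝ)) = 1 := by
  rw [flatDim, AffineSubspace.affineSpan_coe, diagLine, AffineSubspace.direction_mk',
    finrank_span_singleton one_ne_zero]

end DiagLine

namespace CatalanArr

variable {m n : ℕ}

def IsConfig (m : ℕ) {α : Type*} (c : α → ℕ) : Prop :=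
  (∃ j, c j = 0) ∧ ∀ i, 0 < c i → ∃ j, c j < c i ∧ c i ≤ c j + m

def Config (m : ℕ) (α : Type*) : Type _ := {c : α → ℕ // IsConfig m c}

section Counting

variable {α β : Type*}

theorem IsConfig.comp_surjective {c : β → ℕ} (hc : IsConfig m c) {f : α → β}
    (hf : Function.Surjective f) : IsConfig m (c ∘ f) := by
  obtain ⟨⟨j, hj⟩, hgap⟩ := hc
  obtain ⟨j, rfl⟩ := hf j
  refine ⟨⟨j, hj⟩, fun i hi => ?_⟩
  obtain ⟨k, hk⟩ := hgap (f i) hi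
  obtain ⟨k, rfl⟩ := hf k
  exact ⟨k, hk⟩

def Config.congr (e : α ≃ β) : Config m α ≃ Config m β where
  toFun c := ⟨c.1 ∘ e.symm, c.2.comp_surjective e.symm.surjective⟩
  invFun c := ⟨c.1 ∘ e, c.2.comp_surjective e.surjective⟩
  left_inv c := Subtype.ext <| funext fun i => by simp
  right_inv c := Subtype.ext <| funext fun i => by simp

instance [IsEmpty α] : IsEmpty (Config m α) :=
  ⟨fun c => isEmptyElim c.2.1.choose⟩

variable [DecidableEq α]

def extend (S : Finset α) (c : S → ℕ) (M : ℕ) : α → ℕ :=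
  fun i => if h : i ∈ S then c ⟨i, h⟩ else M

theorem isConfig_extend {S : Finset α} {c : S → ℕ} (hc : IsConfig m c) (g : Fin m) :
    IsConfig m (extend S c (Finset.univ.sup c + g + 1)) := by
  obtain ⟨⟨j₀, hj₀⟩, hgap⟩ := hc
  obtain ⟨jmax, -, hjmax⟩ :=
    Finset.exists_mem_eq_sup Finset.univ ⟨j₀, Finset.mem_univ _⟩ c
  refine ⟨⟨j₀, by simp [extend, hj₀]⟩, fun i hi => ?_⟩
  by_cases hiS : i ∈ S
  · obtain ⟨j, hj⟩ := hgap ⟨i, hiS⟩ (by simpa [extend, hiS] using hi)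
    exact ⟨j, by simpa [extend, hiS] using hj⟩
  · have := g.2
    exact ⟨jmax, by
      simp only [extend, hiS, jmax.2, dite_false, dite_true, Subtype.coe_eta]
      omega⟩

theorem sup_extend [Fintype α] {S : Finset α} (hS : S ≠ Finset.univ) {c : S → ℕ} {M : ℕ}
    (hc : ∀ i, c i < M) : Finset.univ.sup (extend S c M) = M := by
  obtain ⟨i, hi⟩ : ∃ i, i ∉ S := by simpa [Finset.eq_univ_iff_forall] using hS
  refine le_antisymm (Finset.sup_le fun j _ => ?_) ?_
  · unfold extend; split_ifs; exacts [(hc _).le, le_rfl]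
  · simpa [extend, hi] using Finset.le_sup (f := extend S c M) (Finset.mem_univ i)

theorem mem_iff_extend_lt {S : Finset α} {c : S → ℕ} {M : ℕ} (hc : ∀ i, c i < M) (i : α) :
    i ∈ S ↔ extend S c M i < M := by
  by_cases hi : i ∈ S <;> simp [extend, hi, hc]

variable [Fintype α]

abbrev Pieces (m : ℕ) (α : Type*) [Fintype α] [DecidableEq α] : Type _ :=
  Σ S : {S : Finset α // S ≠ Finset.univ}, Fin m × Config m S

/-- A nonconstant configuration is cut at its maximum: `S` is the set of coordinates below the
top level, and the top value exceeds the maximum on `S` by `g + 1 ∈ [1, m]`. -/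
def build [Nonempty α] : Option (Pieces m α) → Config m α
  | none => ⟨fun _ => 0, ⟨Classical.arbitrary α, rfl⟩, fun _ h => absurd h (lt_irrefl 0)⟩
  | some ⟨S, g, c⟩ => ⟨extend S c.1 (Finset.univ.sup c.1 + g + 1), isConfig_extend c.2 g⟩

theorem build_injective [Nonempty α] : Function.Injective (build (m := m) (α := α)) := by
  have hlt : ∀ (S : Finset α) (c : S → ℕ) (g : Fin m) i, c i < Finset.univ.sup c + g + 1 :=
    fun S c g i =>
      Nat.lt_succ_of_le (Nat.le_add_right_of_le (Finset.le_sup (Finset.mem_univ i)))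
  have hne : ∀ x : Pieces m α, build (some x) ≠ build none := by
    rintro ⟨⟨S, hS⟩, g, c⟩ h
    obtain ⟨i, hi⟩ : ∃ i, i ∉ S := by simpa [Finset.eq_univ_iff_forall] using hS
    simpa [build, extend, hi] using congrFun (congrArg Subtype.val h) i
  rintro (_ | ⟨⟨S₁, hS₁⟩, g₁, c₁⟩) (_ | ⟨⟨S₂, hS₂⟩, g₂, c₂⟩) h
  · rfl
  · exact absurd h.symm (hne _)
  · exact absurd h (hne _)
  have h' := congrArg Subtype.val h
  simp only [build] at h'
  have hM := congrArg Finset.univ.sup h'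
  rw [sup_extend hS₁ (hlt S₁ c₁.1 g₁), sup_extend hS₂ (hlt S₂ c₂.1 g₂)] at hM
  obtain rfl : S₁ = S₂ := Finset.ext fun i => by
    rw [mem_iff_extend_lt (hlt S₁ c₁.1 g₁), mem_iff_extend_lt (hlt S₂ c₂.1 g₂), h', hM]
  obtain rfl : c₁ = c₂ := Subtype.ext <| funext fun i => by
    simpa [extend] using congrFun h' i
  obtain rfl : g₁ = g₂ := Fin.ext (by omega)
  rfl

theorem build_surjective [Nonempty α] : Function.Surjective (build (m := m) (α := α)) := by
  rintro ⟨c, hc⟩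
  obtain ⟨imax, -, himax⟩ := Finset.exists_mem_eq_sup Finset.univ Finset.univ_nonempty c
  have hle : ∀ i, c i ≤ c imax := fun i => himax ▸ Finset.le_sup (Finset.mem_univ i)
  rcases Nat.eq_zero_or_pos (c imax) with hM | hM
  · exact ⟨none, Subtype.ext <| funext fun i => by simp [build, Nat.le_zero.mp (hM ▸ hle i)]⟩
  set S := Finset.univ.filter (c · < c imax)
  have hS : S ≠ Finset.univ := fun h => by
    have : imax ∈ S := h ▸ Finset.mem_univ imax
    simp [S] at this
  have hc' : IsConfig m fun i : S => c i := by
    obtain ⟨⟨j₀, hj₀⟩, hgap⟩ := hc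
    refine ⟨⟨⟨j₀, by simp [S, hj₀, hM]⟩, hj₀⟩, fun i hi => ?_⟩
    obtain ⟨j, hj⟩ := hgap i hi
    exact ⟨⟨j, by simpa [S] using hj.1.trans (Finset.mem_filter.mp i.2).2⟩, hj⟩
  set M' := Finset.univ.sup fun i : S => c i
  obtain ⟨j, hj, hjm⟩ := hc.2 imax hM
  have hj' : c j ≤ M' :=
    Finset.le_sup (f := fun i : S => c i) (Finset.mem_univ ⟨j, by simpa [S]⟩)
  have hM' : M' < c imax := (Finset.sup_lt_iff hM).mpr fun i _ => (Finset.mem_filter.mp i.2).2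
  refine ⟨some ⟨⟨S, hS⟩, ⟨c imax - M' - 1, by omega⟩, ⟨_, hc'⟩⟩,
    Subtype.ext <| funext fun i => ?_⟩
  by_cases hi : i ∈ S
  · simp [build, extend, hi]
  · have : c i = c imax := le_antisymm (hle i) (by simpa [S] using hi)
    simp only [build, extend, hi, dite_false]
    omega

end Counting

instance Config.finite {α : Type*} [Finite α] : Finite (Config m α) := by
  induction h : Nat.card α using Nat.strong_induction_on generalizing α with
  | _ k ih =>
    classical
    cases nonempty_fintype α
    cases isEmpty_or_nonempty α
    · infer_instance
    have (S : {S : Finset α // S ≠ Finset.univ}) : Finite (Config m S) :=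
      ih _ (h ▸ by
        simpa [Nat.card_eq_fintype_card] using (Finset.card_lt_iff_ne_univ _).mpr S.2) rfl
    exact Finite.of_surjective _ build_surjective

theorem card_config {α : Type*} [Fintype α] [DecidableEq α] [Nonempty α] :
    Nat.card (Config m α) =
      1 + m * ∑ S : {S : Finset α // S ≠ Finset.univ}, Nat.card (Config m S) := by
  rw [← Nat.card_eq_of_bijective _ ⟨build_injective, build_surjective⟩, Finite.card_option,
    Nat.card_sigma, Finset.mul_sum, add_comm]
  simp [Nat.card_prod]

theorem card_config_fin (hn : n ≠ 0) :
    Nat.card (Config m (Fin n)) =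
      1 + m * ∑ k ∈ Finset.range n, n.choose k * Nat.card (Config m (Fin k)) := by
  have : NeZero n := ⟨hn⟩
  rw [card_config]
  congr 2
  have hS (S : Finset (Fin n)) : Nat.card (Config m S) = Nat.card (Config m (Fin S.card)) :=
    Nat.card_congr (Config.congr S.equivFin)
  have key := Finset.sum_erase_add _ (fun S : Finset (Fin n) => Nat.card (Config m (Fin S.card)))
    (Finset.mem_univ Finset.univ)
  rw [← Finset.powerset_univ, Finset.sum_powerset_apply_card fun k => Nat.card (Config m (Fin k)),
    Finset.powerset_univ,
    Finset.sum_subtype _ (p := (· ≠ Finset.univ)) (by simp)] at key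
  simp only [Finset.card_fin, Finset.sum_range_succ, Nat.choose_self, smul_eq_mul, one_mul] at key
  simp only [hS]
  omega

theorem IsConfig.relConnected {α : Type*} {c : α → ℕ} (hc : IsConfig m c) :
    RelConnected fun i j => c i ≤ c j + m ∧ c j ≤ c i + m := by
  intro S hS i j hi
  obtain ⟨j₀, hj₀⟩ := hc.1
  have key : ∀ k, k ∈ S ↔ j₀ ∈ S := by
    intro k
    induction hk : c k using Nat.strong_induction_on generalizing k with
    | _ v ih =>
      rcases Nat.eq_zero_or_pos (c k) with h0 | hpos
      · exact hS k j₀ ⟨by omega, by omega⟩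
      · obtain ⟨l, hlk, hkl⟩ := hc.2 k hpos
        exact (hS k l ⟨hkl, by omega⟩).trans (ih (c l) (hk ▸ hlk) l rfl)
  exact (key j).2 ((key i).1 hi)

def Linked (m : ℕ) (B : Set (Set (Fin n → ℝ))) (i j : Fin n) : Prop :=
  ∃ a : ℤ, |a| ≤ m ∧ hyp n i j a ∈ B

variable {B : Set (Set (Fin n → ℝ))} {p : Fin n → ℝ}

theorem Linked.sub_eq (hp : p ∈ ⋂₀ B) {i j : Fin n} (h : Linked m B i j) :
    ∃ a : ℤ, |a| ≤ m ∧ p i - p j = a :=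
  let ⟨a, ha, hH⟩ := h
  ⟨a, ha, hp _ hH⟩

theorem add_mem_sInter (hB : B ⊆ CatalanArr m n) (hp : p ∈ ⋂₀ B) {v : Fin n → ℝ}
    (hv : ∀ i j, Linked m B i j → v i = v j) : p + v ∈ ⋂₀ B := by
  intro H hH
  obtain ⟨i, j, a, -, ha₁, ha₂, rfl⟩ := hB hH
  have hpa : p i - p j = a := hp _ hH
  have hvij : v i = v j := hv i j ⟨a, abs_le.mpr ⟨ha₁, ha₂⟩, hH⟩
  show (p i + v i) - (p j + v j) = a
  linarith

theorem sInter_eq_diagLine [NeZero n] (hB : B ⊆ CatalanArr m n) (hp : p ∈ ⋂₀ B)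
    (hdim : flatDim (⋂₀ B) = 1) : ⋂₀ B = diagLine p := by
  set D := (affineSpan ℝ (⋂₀ B)).direction
  have hone : (1 : Fin n → ℝ) ∈ D := by
    have h1 : p + 1 ∈ ⋂₀ B := add_mem_sInter hB hp fun _ _ _ => rfl
    simpa using AffineSubspace.vsub_mem_direction (subset_affineSpan ℝ _ h1)
      (subset_affineSpan ℝ _ hp)
  have hD : (ℝ ∙ 1) = D := Submodule.eq_of_le_of_finrank_le
    ((Submodule.span_singleton_le_iff_mem _ _).mpr hone)
    (by rw [finrank_span_singleton one_ne_zero]; exact hdim.le)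
  refine Subset.antisymm (fun x hx => ?_) (fun x hx => ?_)
  · rw [diagLine, hD, AffineSubspace.mk'_eq (subset_affineSpan ℝ _ hp)]
    exact subset_affineSpan ℝ _ hx
  · have hv : ∀ i j, (x - p) i = (x - p) j := mem_diagLine.mp hx
    simpa using add_mem_sInter hB hp fun i j _ => hv i j

theorem linked_relConnected [NeZero n] (hB : B ⊆ CatalanArr m n) (hp : p ∈ ⋂₀ B)
    (hdim : flatDim (⋂₀ B) = 1) : RelConnected (Linked m B) := by
  intro S hS i j hi
  classical
  set v : Fin n → ℝ := fun k => if k ∈ S then 1 else 0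
  have hv : p + v ∈ diagLine p := by
    rw [← SetLike.mem_coe, ← sInter_eq_diagLine hB hp hdim]
    exact add_mem_sInter hB hp fun k l hkl => by simp only [v, hS k l hkl]
  have hvij : v i = v j := by simpa using mem_diagLine.mp hv i j
  by_contra hj
  simp [v, hi, hj] at hvij

theorem exists_isConfig_of_mem_Lk [NeZero n] {F : Set (Fin n → ℝ)}
    (hF : F ∈ Lk (CatalanArr m n) 1) :
    ∃ c : Fin n → ℕ, IsConfig m c ∧
      ((diagLine fun i => (c i : ℝ)) : Set (Fin n → ℝ)) = F := by
  obtain ⟨⟨⟨p, hp⟩, B, hB, rfl⟩, hdim⟩ := hF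
  have hconn := linked_relConnected hB hp hdim
  obtain ⟨i₀, -, hi₀⟩ := Finset.exists_min_image Finset.univ p Finset.univ_nonempty
  have hint : ∀ i, ∃ k : ℕ, p i = p i₀ + k := by
    intro i
    obtain ⟨z, hz⟩ : ∃ z : ℤ, p i - p i₀ = z := by
      refine hconn {k | ∃ z : ℤ, p k - p i₀ = z} (fun k l hkl => ?_) i₀ i ⟨0, by simp⟩
      obtain ⟨a, -, ha⟩ := hkl.sub_eq hp
      exact ⟨fun ⟨z, hz⟩ => ⟨z - a, by push_cast; linarith⟩,
        fun ⟨z, hz⟩ => ⟨z + a, by push_cast; linarith⟩⟩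
    lift z to ℕ using (by exact_mod_cast hz ▸ sub_nonneg.mpr (hi₀ i (Finset.mem_univ i)))
    exact ⟨z, by push_cast at hz; linarith⟩
  choose c hc using hint
  have hci₀ : (c i₀ : ℝ) = 0 := by linarith [hc i₀]
  refine ⟨c, ⟨⟨i₀, by exact_mod_cast hci₀⟩, fun i hi => ?_⟩, ?_⟩
  · obtain ⟨k, l, hkl, hk, hl⟩ := hconn.exists_rel_mem_notMem (S := {k | p k < p i})
      (show p i₀ < p i by linarith [hc i, (show (0 : ℝ) < c i by exact_mod_cast hi)])
      (lt_irrefl (p i))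
    have hlk : p l - p k ≤ m := by
      rcases hkl with h | h <;> obtain ⟨a, ha, e⟩ := h.sub_eq hp <;>
        linarith [abs_le.mp (show |(a : ℝ)| ≤ m by exact_mod_cast ha)]
    simp only [mem_ofPred_eq, not_lt] at hk hl
    refine ⟨k, ?_, ?_⟩
    · exact_mod_cast (show (c k : ℝ) < c i by linarith [hc i, hc k])
    · exact_mod_cast (show (c i : ℝ) ≤ c k + m by linarith [hc i, hc k, hc l])
  · rw [sInter_eq_diagLine hB hp hdim]
    ext x
    simp only [SetLike.mem_coe, mem_diagLine]
    refine forall₂_congr fun i j => ?_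
    rw [hc i, hc j]
    constructor <;> intro h <;> linarith

theorem diagLine_mem_Lk [NeZero n] {c : Fin n → ℕ} (hc : IsConfig m c) :
    ((diagLine fun i => (c i : ℝ)) : Set (Fin n → ℝ)) ∈ Lk (CatalanArr m n) 1 := by
  set L : Set (Fin n → ℝ) := (diagLine fun i => (c i : ℝ) : Set (Fin n → ℝ))
  refine ⟨⟨⟨_, AffineSubspace.self_mem_mk' _ _⟩, {H ∈ CatalanArr m n | L ⊆ H},
    fun H hH => hH.1, Subset.antisymm (fun x hx H hH => hH.2 hx) fun x hx => ?_⟩,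
    flatDim_diagLine _⟩
  have hlt : ∀ i j, i < j → c i ≤ c j + m → c j ≤ c i + m → x i - x j = c i - c j := by
    intro i j hij hi hj
    have hH : hyp n i j (c i - c j) ∈ {H ∈ CatalanArr m n | L ⊆ H} :=
      ⟨⟨i, j, _, hij, by omega, by omega, rfl⟩, fun y hy => by
        have := mem_diagLine.mp hy i j
        simp only [hyp, mem_ofPred_eq]; push_cast; linarith⟩
    have hxH : x i - x j = ((c i - c j : ℤ) : ℝ) := hx _ hH
    simpa using hxH
  rw [SetLike.mem_coe, mem_diagLine]
  refine hc.relConnected.eq_of_forall_rel (f := fun i => x i - c i) fun i j ⟨hi, hj⟩ => ?_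
  rcases lt_trichotomy i j with h | rfl | h
  · linarith [hlt i j h hi hj]
  · rfl
  · linarith [hlt j i h hj hi]

theorem eq_of_diagLine_eq {c c' : Fin n → ℕ} (hc : ∃ j, c j = 0) (hc' : ∃ j, c' j = 0)
    (h : (diagLine fun i => (c i : ℝ)) = diagLine fun i => (c' i : ℝ)) : c = c' := by
  have hmem : (fun i => (c i : ℝ)) ∈ diagLine fun i => (c' i : ℝ) :=
    h ▸ AffineSubspace.self_mem_mk' _ _
  replace hmem := mem_diagLine.mp hmem
  obtain ⟨j, hj⟩ := hc
  obtain ⟨j', hj'⟩ := hc'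
  funext i
  have h₁ := hmem i j
  have h₂ := hmem i j'
  simp only [hj, hj', Nat.cast_zero] at h₁ h₂
  have hc₀ : (0 : ℝ) ≤ c j' := Nat.cast_nonneg _
  have hc₀' : (0 : ℝ) ≤ c' j := Nat.cast_nonneg _
  exact_mod_cast (by linarith : (c i : ℝ) = c' i)

theorem ncard_Lk_one [NeZero n] :
    (Lk (CatalanArr m n) 1).ncard = Nat.card (Config m (Fin n)) := by
  rw [← Nat.card_coe_set_eq]
  refine (Nat.card_eq_of_bijective
    (fun c : Config m (Fin n) => (⟨_, diagLine_mem_Lk c.2⟩ : Lk (CatalanArr m n) 1))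
    ⟨fun c c' h => Subtype.ext (eq_of_diagLine_eq c.2.1 c'.2.1
      (SetLike.coe_injective (congrArg Subtype.val h))), fun ⟨F, hF⟩ => ?_⟩).symm
  obtain ⟨c, hc, rfl⟩ := exists_isConfig_of_mem_Lk hF
  exact ⟨⟨c, hc⟩, rfl⟩

end CatalanArr

namespace PowerSeries

open Nat

variable {K : Type*} [Field K] [CharZero K]

theorem coeff_exp_mul_mk (a : ℕ → K) (n : ℕ) :
    coeff n (exp K * mk fun k => a k / k !) =
      (∑ k ∈ Finset.range (n + 1), n.choose k * a k) / n ! := by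
  rw [mul_comm, coeff_mul, Finset.Nat.sum_antidiagonal_eq_sum_range_succ_mk, Finset.sum_div]
  refine Finset.sum_congr rfl fun k hk => ?_
  rw [coeff_mk, coeff_exp, Nat.cast_choose K (Nat.lt_succ_iff.mp (Finset.mem_range.mp hk))]
  simp only [map_div₀, map_one, map_natCast]
  field_simp
  rw [mul_div_mul_right _ _ (Nat.cast_ne_zero.mpr n.factorial_ne_zero)]

theorem one_sub_C_mul_exp_sub_one_mul_mk (r : K) (a : ℕ → K) (h0 : a 0 = 0)
    (h : ∀ n ≠ 0, a n = 1 + r * ∑ k ∈ Finset.range n, n.choose k * a k) :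
    (1 - C r * (exp K - 1)) * mk (fun n => a n / n !) = exp K - 1 := by
  ext n
  rw [sub_mul, one_mul, mul_assoc, sub_mul, one_mul, map_sub, coeff_C_mul, map_sub,
    coeff_exp_mul_mk, map_sub, coeff_exp, coeff_one, coeff_mk, Finset.sum_range_succ]
  rcases eq_or_ne n 0 with rfl | hn
  · simp [h0]
  · rw [h n hn]
    simp only [choose_self, cast_one, one_mul, one_div, map_inv₀, map_natCast, hn, ↓reduceIte,
      sub_zero]
    field_simp
    ring

end PowerSeries

/-- If `F ∈ ℚ⟦X⟧` has `X^n`-coefficient `|L_1(C^m_n)|/n!` for `n ≥ 1` and `0` for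
`n = 0`, then `(1 - m·(exp X - 1)) · F = exp X - 1`. -/
theorem catalan_egf (m : ℕ) (F : PowerSeries ℚ)
    (hF : ∀ n : ℕ, PowerSeries.coeff n F =
      if n = 0 then 0 else ((Lk (CatalanArr m n) 1).ncard : ℚ) / n.factorial) :
    (1 - (m : PowerSeries ℚ) * (PowerSeries.exp ℚ - 1)) * F = PowerSeries.exp ℚ - 1 := by
  have hF_eq :
      F = PowerSeries.mk fun n => (Nat.card (CatalanArr.Config m (Fin n)) : ℚ) / n.factorial := by
    ext n
    rw [hF, PowerSeries.coeff_mk]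
    rcases eq_or_ne n 0 with rfl | hn
    · simp
    · have : NeZero n := ⟨hn⟩
      rw [if_neg hn, CatalanArr.ncard_Lk_one]
  rw [hF_eq, ← map_natCast PowerSeries.C m]
  refine PowerSeries.one_sub_C_mul_exp_sub_one_mul_mk _ _ (by simp) fun n hn => ?_
  exact_mod_cast CatalanArr.card_config_fin hn
end

section
/- Fix integers m ≥ 0 and k ≥ 1. In ℚ⟦X⟧, let F be the power series whose coefficient of X^n is |L_1(C^m_n)|/n! for n ≥ 1 and 0 for n = 0, and let F_k be the power series whose coefficient of X^n is |L_k(C^m_n)|/n! for n ≥ 1 and 0 for n = 0, where |L_k(C^m_n)| is the number of k-dimensional flats of the n-dimensional extended Catalan arrangement. Then k! · F_k = F^k. -/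
open Set

/-!
A flat `X` of `C^m_n` is determined by the partition of the coordinates into the blocks on which
all differences `x i - x j` are constant on `X`, together with these constant differences, which
are integers. Inside a block, the pairs `i, j` whose difference is at most `m` in absolute value
(i.e. lie on a common hyperplane of the arrangement) must connect the block. Shifting the offsets
of each block so that their minimum is `0`, a `k`-dimensional flat together with an ordering of its
`k` blocks is the same thing as a map `p : [n] → [k]` with such a "Catalan block" structure on every
fibre. Hence `k! |L_k(C^m_n)| = ∑_p ∏_t c(|p⁻¹ t|)`, where `c j` is the number of Catalan blocks on
`j` points, so that `c j = |L_1(C^m_j)|` for `j ≥ 1` and `c 0 = 0`. The exponential formula for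
such weighted colourings, proved by splitting off the fibre of one colour, gives `k! F_k = F^k`.
-/

open Finset PowerSeries Function
open scoped Nat

section Coloring

variable {ι : Type*} [DecidableEq ι] {k : ℕ}

def succColoring (S : Finset ι) (q : {i // i ∉ S} → Fin k) (i : ι) : Fin (k + 1) :=
  if h : i ∈ S then 0 else (q ⟨i, h⟩).succ

lemma succColoring_eq_zero_iff {S : Finset ι} {q : {i // i ∉ S} → Fin k} {i : ι} :
    succColoring S q i = 0 ↔ i ∈ S := by
  by_cases h : i ∈ S <;> simp [succColoring, h, Fin.succ_ne_zero]

lemma succColoring_eq_succ_iff {S : Finset ι} {q : {i // i ∉ S} → Fin k} {i : ι} {t : Fin k} :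
    succColoring S q i = t.succ ↔ ∃ h : i ∉ S, q ⟨i, h⟩ = t := by
  by_cases h : i ∈ S <;> simp [succColoring, h, (Fin.succ_ne_zero t).symm]

lemma bijective_succColoring [Fintype ι] :
    Bijective fun x : Σ S : Finset ι, ({i // i ∉ S} → Fin k) => succColoring x.1 x.2 := by
  refine ⟨?_, fun p => ?_⟩
  · rintro ⟨S, q⟩ ⟨S', q'⟩ (h : succColoring S q = succColoring S' q')
    obtain rfl : S = S' := by
      ext i
      rw [← succColoring_eq_zero_iff (q := q), congrFun h i, succColoring_eq_zero_iff]
    congr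
    funext ⟨i, hi⟩
    simpa [succColoring, hi] using congrFun h i
  · refine ⟨⟨univ.filter (p · = 0), fun i => (p i).pred (by simpa using i.2)⟩, funext fun i => ?_⟩
    by_cases h : p i = 0 <;> simp [succColoring, h]

variable {R : Type*} [CommSemiring R] (c : ℕ → R)

def coloringWeight (k : ℕ) (ι : Type*) [Fintype ι] [DecidableEq ι] : R :=
  ∑ p : ι → Fin k, ∏ t, c (Fintype.card {i // p i = t})

variable [Fintype ι]

lemma coloringWeight_congr {κ : Type*} [Fintype κ] [DecidableEq κ] (e : ι ≃ κ) (k : ℕ) :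
    coloringWeight c k ι = coloringWeight c k κ :=
  Fintype.sum_equiv (e.arrowCongr (Equiv.refl _)) _ _ fun p =>
    prod_congr rfl fun t _ => congrArg c <| Fintype.card_congr <| e.subtypeEquiv fun i => by simp

lemma coloringWeight_zero : coloringWeight c 0 ι = 0 ^ Fintype.card ι := by
  simp [coloringWeight]

lemma coloringWeight_one : coloringWeight c 1 ι = c (Fintype.card ι) := by
  rw [coloringWeight, Fintype.sum_unique, Fin.prod_univ_one]
  exact congrArg c <| Fintype.card_congr <| Equiv.subtypeUnivEquiv fun i => Subsingleton.elim _ _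

lemma coloringWeight_succ (k : ℕ) :
    coloringWeight c (k + 1) ι = ∑ S : Finset ι, c #S * coloringWeight c k {i // i ∉ S} := by
  simp only [coloringWeight, mul_sum]
  rw [← Fintype.sum_sigma' fun S (q : {i // i ∉ S} → Fin k) =>
    c #S * ∏ t, c (Fintype.card {i // q i = t})]
  refine (Fintype.sum_bijective _ bijective_succColoring _ _ fun ⟨S, q⟩ => ?_).symm
  rw [Fin.prod_univ_succ]
  congr 2
  · exact ((Fintype.card_congr (Equiv.subtypeEquivRight fun i => succColoring_eq_zero_iff)).trans
      (Fintype.card_coe S)).symm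
  · exact funext fun t => congrArg c <| Fintype.card_congr <|
      (Equiv.subtypeSubtypeEquivSubtypeExists _ _).trans
        (Equiv.subtypeEquivRight fun i => succColoring_eq_succ_iff).symm

lemma coloringWeight_fin_succ (n k : ℕ) :
    coloringWeight c (k + 1) (Fin n) =
      ∑ j ∈ range (n + 1), n.choose j • (c j * coloringWeight c k (Fin (n - j))) := by
  have hcompl (S : Finset (Fin n)) :
      coloringWeight c k {i // i ∉ S} = coloringWeight c k (Fin (n - #S)) :=
    coloringWeight_congr c (Fintype.equivFinOfCardEq (by simp [Fintype.card_subtype_compl])) k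
  simp only [coloringWeight_succ, hcompl, ← Finset.powerset_univ]
  rw [sum_powerset_apply_card (fun j => c j * coloringWeight c k (Fin (n - j))), card_univ,
    Fintype.card_fin]

end Coloring

theorem PowerSeries.mk_coloringWeight_eq_pow {K : Type*} [Field K] [CharZero K] (c : ℕ → K)
    (k : ℕ) : mk (fun n => coloringWeight c k (Fin n) / n !) = (mk fun n => c n / n !) ^ k := by
  induction k with
  | zero =>
    ext n
    rcases n with _ | n <;> simp [coloringWeight_zero]
  | succ k ih =>
    ext n
    rw [pow_succ', ← ih, coeff_mul, Nat.sum_antidiagonal_eq_sum_range_succ_mk, coeff_mk,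
      coloringWeight_fin_succ, sum_div]
    refine sum_congr rfl fun j hj => ?_
    have hjn : j ≤ n := Nat.lt_succ_iff.mp (mem_range.mp hj)
    have : (n ! : K) ≠ 0 := Nat.cast_ne_zero.mpr n.factorial_ne_zero
    simp only [coeff_mk, nsmul_eq_mul, Nat.cast_choose K hjn]
    field_simp

lemma SimpleGraph.Reachable.apply_eq_of_forall_adj {V γ : Type*} {G : SimpleGraph V} {f : V → γ}
    (hf : ∀ a b, G.Adj a b → f a = f b) {u v : V} (h : G.Reachable u v) : f u = f v := by
  obtain ⟨w⟩ := h
  induction w with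
  | nil => rfl
  | cons hadj _ ih => exact (hf _ _ hadj).trans ih

lemma SimpleGraph.exists_surjective_fin_iff_reachable {V : Type*} [Finite V] (G : SimpleGraph V) :
    ∃ (K : ℕ) (p : V → Fin K), Surjective p ∧ ∀ u v, p u = p v ↔ G.Reachable u v :=
  let eqv := Finite.equivFin G.ConnectedComponent
  ⟨_, fun v => eqv (G.connectedComponentMk v), eqv.surjective.comp Quot.mk_surjective,
    fun _ _ => eqv.apply_eq_iff_eq.trans ConnectedComponent.eq⟩

lemma SimpleGraph.preconnected_of_forall_reachable_iff {V β : Type*} {G : SimpleGraph V}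
    {p : V → β} (hp : ∀ u v, p u = p v ↔ G.Reachable u v) {t : β} {H : SimpleGraph {v // p v = t}}
    (hH : ∀ u v : {v // p v = t}, G.Adj u v → H.Adj u v) : H.Preconnected := by
  rintro ⟨u, rfl⟩ ⟨v, hv⟩
  let C := G.connectedComponentMk u
  have hC (w : V) : w ∈ C.supp ↔ p w = p u := by
    rw [C.mem_supp_iff, ConnectedComponent.eq, hp]
  let f : C.toSimpleGraph →g H := ⟨fun w => ⟨w, (hC w).mp w.2⟩, fun hab => hH _ _ hab⟩
  exact (C.connected_toSimpleGraph.preconnected ⟨u, (hC u).mpr rfl⟩ ⟨v, (hC v).mpr hv⟩).map f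

lemma Function.Surjective.exists_equiv_comp_eq {α β : Type*} {p p' : α → β} (hp : Surjective p)
    (hp' : Surjective p') (h : ∀ i j, p i = p j ↔ p' i = p' j) : ∃ σ : β ≃ β, p' = σ ∘ p := by
  have hσ (i : α) : p' (surjInv hp (p i)) = p' i := (h _ _).mp (surjInv_eq hp (p i))
  refine ⟨Equiv.ofBijective (p' ∘ surjInv hp) ⟨hp.forall₂.mpr fun i j hij => ?_, fun t => ?_⟩,
    funext fun i => (hσ i).symm⟩
  · simp only [comp_apply, hσ] at hij
    rw [(h i j).mpr hij]
  · obtain ⟨i, rfl⟩ := hp' t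
    exact ⟨p i, hσ i⟩

section Blocks

variable {α β : Type*} {m : ℕ}

def nearGraph (m : ℕ) (d : α → ℤ) : SimpleGraph α where
  Adj i j := i ≠ j ∧ |d i - d j| ≤ m
  symm := ⟨fun _ _ h => ⟨h.1.symm, abs_sub_comm (d _) _ ▸ h.2⟩⟩
  loopless := ⟨fun _ h => h.1 rfl⟩

def IsCatalanBlock (m : ℕ) (d : α → ℤ) : Prop :=
  (nearGraph m d).Preconnected ∧ IsLeast (range d) 0

lemma nearGraph_sub_const (d : α → ℤ) (a : ℤ) : nearGraph m (fun i => d i - a) = nearGraph m d := by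
  ext i j
  simp [nearGraph]

lemma abs_sub_le_of_walk {d : α → ℤ} {u v : α} (w : (nearGraph m d).Walk u v) :
    |d u - d v| ≤ m * w.length := by
  induction w with
  | nil => simp
  | @cons a b c hadj _ ih =>
    calc |d a - d c| ≤ |d a - d b| + |d b - d c| := abs_sub_le _ _ _
      _ ≤ m + m * _ := add_le_add hadj.2 ih
      _ = _ := by simp [SimpleGraph.Walk.length_cons]; ring

lemma IsCatalanBlock.mem_Icc [Fintype α] {d : α → ℤ} (hd : IsCatalanBlock m d) (i : α) :
    d i ∈ Set.Icc 0 (m * Fintype.card α : ℤ) := by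
  obtain ⟨⟨j, hj⟩, hmin⟩ := hd.2
  obtain ⟨w, hw⟩ := (hd.1 i j).exists_isPath
  have hlen : (w.length : ℤ) ≤ Fintype.card α := by exact_mod_cast hw.length_lt.le
  have := abs_sub_le_of_walk w
  rw [hj, sub_zero, abs_of_nonneg (hmin (mem_range_self i))] at this
  exact ⟨hmin (mem_range_self i), this.trans (by gcongr)⟩

instance [Finite α] : Finite {d : α → ℤ // IsCatalanBlock m d} := by
  classical
  have := Fintype.ofFinite α
  refine Set.Finite.to_subtype ((Set.finite_Icc (0 : α → ℤ) fun _ => m * Fintype.card α).subset ?_)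
  exact fun d (hd : IsCatalanBlock m d) => ⟨fun i => (hd.mem_Icc i).1, fun i => (hd.mem_Icc i).2⟩

instance [IsEmpty α] : IsEmpty {d : α → ℤ // IsCatalanBlock m d} :=
  ⟨fun ⟨_, hd⟩ => isEmptyElim hd.2.1.choose⟩

lemma isCatalanBlock_comp_equiv (e : α ≃ β) {d : β → ℤ} :
    IsCatalanBlock m (d ∘ e) ↔ IsCatalanBlock m d := by
  let iso : nearGraph m (d ∘ e) ≃g nearGraph m d :=
    { toEquiv := e, map_rel_iff' := by simp [nearGraph] }
  rw [IsCatalanBlock, IsCatalanBlock, iso.preconnected_iff, EquivLike.range_comp]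

lemma card_catalanBlock_congr (e : α ≃ β) :
    Nat.card {d : α → ℤ // IsCatalanBlock m d} = Nat.card {d : β → ℤ // IsCatalanBlock m d} :=
  Nat.card_congr <| (e.arrowCongr (Equiv.refl ℤ)).subtypeEquiv fun d => by
    rw [← isCatalanBlock_comp_equiv e.symm]; rfl

lemma exists_isCatalanBlock_sub [Finite α] [Nonempty α] {e : α → ℤ}
    (he : (nearGraph m e).Preconnected) : ∃ a, IsCatalanBlock m fun i => e i - a := by
  obtain ⟨i₀, hi₀⟩ := Finite.exists_min e
  refine ⟨e i₀, ?_, ⟨i₀, sub_self _⟩, ?_⟩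
  · rwa [nearGraph_sub_const]
  · rintro _ ⟨i, rfl⟩
    exact sub_nonneg.mpr (hi₀ i)

lemma eq_of_isLeast_of_forall_sub_eq {d d' : α → ℤ} (hd : IsLeast (range d) 0)
    (hd' : IsLeast (range d') 0) (h : ∀ i j, d i - d j = d' i - d' j) : d = d' := by
  obtain ⟨⟨i, hi⟩, hmin⟩ := hd
  obtain ⟨⟨j, hj⟩, hmin'⟩ := hd'
  have := hmin (mem_range_self j)
  have := hmin' (mem_range_self i)
  have := h i j
  funext l
  linarith [h l j]

end Blocks

section Data

variable {ι : Type*} {m k : ℕ}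

def catalanData (m : ℕ) (ι : Type*) (k : ℕ) : Set ((ι → Fin k) × (ι → ℤ)) :=
  {pd | ∀ t, IsCatalanBlock m fun i : {i // pd.1 i = t} => pd.2 i}

variable {p : ι → Fin k} {d : ι → ℤ}

lemma surjective_of_mem_catalanData (h : (p, d) ∈ catalanData m ι k) : Surjective p :=
  fun t => let ⟨⟨i, hi⟩, _⟩ := (h t).2.1; ⟨i, hi⟩

lemma comp_perm_mem_catalanData (σ : Equiv.Perm (Fin k)) (h : (p, d) ∈ catalanData m ι k) :
    (σ ∘ p, d) ∈ catalanData m ι k := fun t => by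
  let e : {i // σ (p i) = t} ≃ {i // p i = σ.symm t} :=
    Equiv.subtypeEquivRight fun _ => σ.eq_symm_apply.symm
  exact (isCatalanBlock_comp_equiv e (d := fun i => d i)).mpr (h (σ.symm t))

lemma comp_perm_mem_catalanData_iff (σ : Equiv.Perm (Fin k)) :
    (σ ∘ p, d) ∈ catalanData m ι k ↔ (p, d) ∈ catalanData m ι k := by
  refine ⟨fun h => ?_, comp_perm_mem_catalanData σ⟩
  simpa [← Function.comp_assoc] using comp_perm_mem_catalanData σ.symm h

def catalanDataEquiv (m : ℕ) (ι : Type*) (k : ℕ) :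
    catalanData m ι k ≃ Σ p : ι → Fin k, ∀ t, {d : {i // p i = t} → ℤ // IsCatalanBlock m d} where
  toFun x := ⟨x.1.1, fun t => ⟨fun i => x.1.2 i, x.2 t⟩⟩
  invFun x := ⟨(x.1, fun i => (x.2 (x.1 i)).1 ⟨i, rfl⟩), fun t => by
    convert (x.2 t).2 using 1
    funext ⟨i, hi⟩
    subst hi
    rfl⟩
  left_inv _ := rfl
  right_inv x := by
    refine Sigma.ext rfl (heq_of_eq (funext fun t => Subtype.ext (funext fun ⟨i, hi⟩ => ?_)))
    subst hi
    rfl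

lemma natCast_card_catalanData {R : Type*} [CommSemiring R] [Fintype ι] [DecidableEq ι] :
    (Nat.card (catalanData m ι k) : R) =
      coloringWeight (fun j => (Nat.card {d : Fin j → ℤ // IsCatalanBlock m d} : R)) k ι := by
  rw [Nat.card_congr (catalanDataEquiv m ι k), Nat.card_sigma, coloringWeight, Nat.cast_sum]
  refine Fintype.sum_congr _ _ fun p => ?_
  rw [Nat.card_pi, Nat.cast_prod]
  exact prod_congr rfl fun t _ => by rw [card_catalanBlock_congr (Fintype.equivFin _)]

end Data

section Flats

variable {ι κ : Type*} {p : ι → κ} {d : ι → ℤ}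

def flatOf (p : ι → κ) (d : ι → ℤ) : Set (ι → ℝ) :=
  {x | ∀ i j, p i = p j → x i - x j = d i - d j}

lemma intCast_mem_flatOf : (fun i => (d i : ℝ)) ∈ flatOf p d := fun _ _ _ => rfl

lemma flatOf_comp {γ : Type*} {σ : κ → γ} (hσ : Injective σ) : flatOf (σ ∘ p) d = flatOf p d := by
  simp only [flatOf, comp_apply, hσ.eq_iff]

lemma exists_forall_mem_flatOf_sub_eq_iff [DecidableEq κ] {i j : ι} :
    (∃ c : ℝ, ∀ x ∈ flatOf p d, x i - x j = c) ↔ p i = p j := by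
  refine ⟨fun ⟨c, hc⟩ => ?_, fun h => ⟨d i - d j, fun x hx => hx i j h⟩⟩
  by_contra hij
  let y : ι → ℝ := fun l => d l + if p l = p i then 1 else 0
  have hy : y ∈ flatOf p d := fun a b hab => by simp only [y, hab]; ring
  have h₁ := hc _ intCast_mem_flatOf
  have h₂ := hc y hy
  simp only [y, if_pos, if_neg (Ne.symm hij)] at h₂
  linarith

lemma flatOf_eq_mk' (hp : Surjective p) :
    flatOf p d =
      AffineSubspace.mk' (fun i => (d i : ℝ)) (LinearMap.range (LinearMap.funLeft ℝ ℝ p)) := by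
  ext x
  simp only [SetLike.mem_coe, AffineSubspace.mem_mk', LinearMap.mem_range, vsub_eq_sub, funext_iff,
    LinearMap.funLeft_apply, Pi.sub_apply]
  refine ⟨fun hx => ⟨fun t => x (surjInv hp t) - d (surjInv hp t), fun i => ?_⟩,
    fun ⟨g, hg⟩ i j hij => ?_⟩
  · linarith [hx _ i (surjInv_eq hp (p i))]
  · linarith [hg i, hg j, congrArg g hij]

lemma flatDim_flatOf {n k : ℕ} {p : Fin n → Fin k} {d : Fin n → ℤ} (hp : Surjective p) :
    flatDim (flatOf p d) = k := by
  rw [flatDim, flatOf_eq_mk' hp, AffineSubspace.affineSpan_coe, AffineSubspace.direction_mk',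
    LinearMap.finrank_range_of_inj (LinearMap.funLeft_injective_of_surjective ℝ ℝ p hp),
    Module.finrank_fintype_fun_eq_card, Fintype.card_fin]

variable {m k : ℕ}

lemma exists_mem_catalanData_flatOf_eq [Finite ι] {p : ι → Fin k} {e : ι → ℤ} (hp : Surjective p)
    (he : ∀ t, (nearGraph m fun i : {i // p i = t} => e i).Preconnected) :
    ∃ d, (p, d) ∈ catalanData m ι k ∧ flatOf p d = flatOf p e := by
  have (t : Fin k) : Nonempty {i // p i = t} := let ⟨i, hi⟩ := hp t; ⟨⟨i, hi⟩⟩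
  choose a ha using fun t => exists_isCatalanBlock_sub (he t)
  refine ⟨fun i => e i - a (p i), fun t => ?_, ?_⟩
  · convert ha t using 2 with i
    exact congrArg (e i - a ·) i.2
  · ext x
    refine forall₃_congr fun i j hij => ?_
    simp only [hij, Int.cast_sub, sub_sub_sub_cancel_right]

lemma exists_perm_of_flatOf_eq {p p' : ι → Fin k} {d d' : ι → ℤ}
    (h : (p, d) ∈ catalanData m ι k) (h' : (p', d') ∈ catalanData m ι k)
    (heq : flatOf p d = flatOf p' d') : ∃ σ : Equiv.Perm (Fin k), p' = σ ∘ p ∧ d' = d := by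
  obtain ⟨σ, rfl⟩ := (surjective_of_mem_catalanData h).exists_equiv_comp_eq
    (surjective_of_mem_catalanData h') fun i j => by
      rw [← exists_forall_mem_flatOf_sub_eq_iff (d := d), heq, exists_forall_mem_flatOf_sub_eq_iff]
  refine ⟨σ, rfl, funext fun i => ?_⟩
  rw [flatOf_comp σ.injective] at heq
  rw [comp_perm_mem_catalanData_iff] at h'
  have hsub (a b : {l // p l = p i}) : d' a - d' b = d a - d b := by
    have := (heq ▸ intCast_mem_flatOf : (fun l => (d l : ℝ)) ∈ flatOf p d') a b (a.2.trans b.2.symm)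
    simp only at this
    exact_mod_cast this.symm
  exact congrFun (eq_of_isLeast_of_forall_sub_eq (h' (p i)).2 (h (p i)).2 hsub) ⟨i, rfl⟩

end Flats

section CatalanFlats

variable {m n k : ℕ}

lemma setOf_sub_eq_mem_catalanArr {a b : Fin n} (hab : a ≠ b) {c : ℤ} (hc : |c| ≤ m) :
    {x : Fin n → ℝ | x a - x b = c} ∈ CatalanArr m n := by
  obtain ⟨hc₁, hc₂⟩ := abs_le.mp hc
  rcases hab.lt_or_gt with h | h
  · exact ⟨a, b, c, h, hc₁, hc₂, rfl⟩
  · refine ⟨b, a, -c, h, by omega, by omega, ?_⟩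
    ext x
    simp only [hyp, mem_ofPred_eq, Int.cast_neg]
    constructor <;> intro <;> linarith

lemma flatOf_mem_flats {p : Fin n → Fin k} {d : Fin n → ℤ}
    (h : (p, d) ∈ catalanData m (Fin n) k) : flatOf p d ∈ flats (CatalanArr m n) := by
  refine ⟨⟨_, intCast_mem_flatOf⟩, {H ∈ CatalanArr m n | flatOf p d ⊆ H}, fun H hH => hH.1,
    subset_antisymm (fun x hx => mem_sInter.mpr fun H hH => hH.2 hx) fun x hx i j hij => ?_⟩
  have hadj (a b : {l // p l = p j})
      (hab : (nearGraph m fun l : {l // p l = p j} => d l).Adj a b) : x a - d a = x b - d b := by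
    have hH : {y : Fin n → ℝ | y a - y b = ((d a - d b : ℤ) : ℝ)} ∈ CatalanArr m n :=
      setOf_sub_eq_mem_catalanArr (Subtype.coe_ne_coe.mpr hab.1) hab.2
    have := mem_sInter.mp hx _ ⟨hH, fun y hy => by simpa using hy a b (a.2.trans b.2.symm)⟩
    simp only [mem_ofPred_eq, Int.cast_sub] at this
    linarith
  have := ((h (p j)).1 ⟨i, hij⟩ ⟨j, rfl⟩).apply_eq_of_forall_adj hadj
  linarith

lemma flatOf_mem_Lk {p : Fin n → Fin k} {d : Fin n → ℤ} (h : (p, d) ∈ catalanData m (Fin n) k) :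
    flatOf p d ∈ Lk (CatalanArr m n) k :=
  ⟨flatOf_mem_flats h, flatDim_flatOf (surjective_of_mem_catalanData h)⟩

lemma exists_flatOf_eq_of_mem_flats {F : Set (Fin n → ℝ)} (hF : F ∈ flats (CatalanArr m n)) :
    ∃ (K : ℕ) (p : Fin n → Fin K) (e : Fin n → ℤ), Surjective p ∧
      (∀ t, (nearGraph m fun i : {i // p i = t} => e i).Preconnected) ∧ F = flatOf p e := by
  obtain ⟨⟨x₀, hx₀⟩, B, hB, rfl⟩ := hF
  let G : SimpleGraph (Fin n) :=
    { Adj a b := a ≠ b ∧ ∃ c : ℤ, |c| ≤ m ∧ ∀ x ∈ ⋂₀ B, x a - x b = c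
      symm := ⟨fun a b ⟨hab, c, hc, h⟩ => ⟨hab.symm, -c, by rwa [abs_neg], fun x hx => by
        push_cast; linarith [h x hx]⟩⟩
      loopless := ⟨fun _ h => h.1 rfl⟩ }
  -- `x₀` has integer differences along the edges of `G`, so `⌊x₀⌋` keeps its differences on
  -- each connected component.
  have hfloor {a b} (hab : G.Adj a b) :
      |⌊x₀ a⌋ - ⌊x₀ b⌋| ≤ m ∧ x₀ a - x₀ b = ⌊x₀ a⌋ - ⌊x₀ b⌋ := by
    obtain ⟨c, hc, h⟩ := hab.2
    rw [sub_eq_iff_eq_add.mp (h x₀ hx₀), Int.floor_intCast_add]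
    simpa using hc
  obtain ⟨K, p, hp, hpG⟩ := G.exists_surjective_fin_iff_reachable
  have hx₀_sub {i j} (hij : p i = p j) : x₀ i - x₀ j = ⌊x₀ i⌋ - ⌊x₀ j⌋ := by
    have := ((hpG i j).mp hij).apply_eq_of_forall_adj (f := fun a => x₀ a - ⌊x₀ a⌋)
      fun a b hab => by linarith [(hfloor hab).2]
    linarith
  refine ⟨K, p, fun i => ⌊x₀ i⌋, hp, fun t => SimpleGraph.preconnected_of_forall_reachable_iff hpG
    fun u v huv => ⟨fun h => huv.1 (congrArg Subtype.val h), (hfloor huv).1⟩, ?_⟩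
  ext y
  refine ⟨fun hy i j hij => ?_, fun hy => mem_sInter.mpr fun H hH => ?_⟩
  · have := ((hpG i j).mp hij).apply_eq_of_forall_adj (f := fun a => y a - x₀ a)
      fun a b hab => by
        obtain ⟨c, -, h⟩ := hab.2
        linarith [h y hy, h x₀ hx₀]
    linarith [hx₀_sub hij]
  · obtain ⟨a, b, c, hab, hc₁, hc₂, rfl⟩ := hB hH
    have hadj : G.Adj a b := ⟨hab.ne, c, abs_le.mpr ⟨hc₁, hc₂⟩, fun x hx => mem_sInter.mp hx _ hH⟩
    have hpab := (hpG a b).mpr hadj.reachable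
    show y a - y b = c
    rw [hy a b hpab, ← hx₀_sub hpab]
    exact mem_sInter.mp hx₀ _ hH

lemma exists_mem_catalanData_of_mem_Lk {F : Set (Fin n → ℝ)} (hF : F ∈ Lk (CatalanArr m n) k) :
    ∃ pd ∈ catalanData m (Fin n) k, F = flatOf pd.1 pd.2 := by
  obtain ⟨hflat, rfl⟩ := hF
  obtain ⟨K, p, e, hp, he, rfl⟩ := exists_flatOf_eq_of_mem_flats hflat
  obtain ⟨d, hd, hde⟩ := exists_mem_catalanData_flatOf_eq hp he
  rw [flatDim_flatOf hp]
  exact ⟨(p, d), hd, hde.symm⟩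

lemma card_catalanData_eq_factorial_mul_ncard (m n k : ℕ) :
    Nat.card (catalanData m (Fin n) k) = k ! * (Lk (CatalanArr m n) k).ncard := by
  choose rep hrep hflat using fun F : Lk (CatalanArr m n) k => exists_mem_catalanData_of_mem_Lk F.2
  let Ψ (Fσ : Lk (CatalanArr m n) k × Equiv.Perm (Fin k)) : catalanData m (Fin n) k :=
    ⟨(Fσ.2 ∘ (rep Fσ.1).1, (rep Fσ.1).2), comp_perm_mem_catalanData Fσ.2 (hrep Fσ.1)⟩
  have hΨ : Bijective Ψ := by
    refine ⟨fun ⟨F, σ⟩ ⟨F', σ'⟩ h => ?_, fun ⟨⟨p, d⟩, h⟩ => ?_⟩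
    · simp only [Ψ, Subtype.mk.injEq, Prod.mk.injEq] at h
      obtain rfl : F = F' := Subtype.ext <| by
        rw [hflat F, hflat F', ← flatOf_comp σ.injective, h.1, h.2, flatOf_comp σ'.injective]
      rw [Equiv.coe_fn_injective
        ((surjective_of_mem_catalanData (hrep F)).injective_comp_right h.1)]
    · obtain ⟨σ, hσ, hd⟩ := exists_perm_of_flatOf_eq (hrep ⟨_, flatOf_mem_Lk h⟩) h
        (hflat ⟨_, flatOf_mem_Lk h⟩).symm
      exact ⟨(⟨_, flatOf_mem_Lk h⟩, σ), Subtype.ext (Prod.ext hσ.symm hd.symm)⟩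
  rw [← Nat.card_congr (Equiv.ofBijective Ψ hΨ), Nat.card_prod, Nat.card_perm, Nat.card_fin,
    Nat.card_coe_set_eq, mul_comm]

end CatalanFlats

/-- If `F, F_k ∈ ℚ⟦X⟧` are the exponential generating functions of
`|L_1(C^m_n)|` and `|L_k(C^m_n)|` respectively, then `k! · F_k = F^k`. -/
theorem catalan_egf_pow (m k : ℕ) (hk : 1 ≤ k) (F Fk : PowerSeries ℚ)
    (hF : ∀ n : ℕ, PowerSeries.coeff n F =
      if n = 0 then 0 else ((Lk (CatalanArr m n) 1).ncard : ℚ) / n.factorial)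
    (hFk : ∀ n : ℕ, PowerSeries.coeff n Fk =
      if n = 0 then 0 else ((Lk (CatalanArr m n) k).ncard : ℚ) / n.factorial) :
    (k.factorial : PowerSeries ℚ) * Fk = F ^ k := by
  let c (j : ℕ) : ℚ := Nat.card {d : Fin j → ℤ // IsCatalanBlock m d}
  have hcount (j n : ℕ) :
      (j ! * (Lk (CatalanArr m n) j).ncard : ℚ) = coloringWeight c j (Fin n) := by
    rw [← natCast_card_catalanData, card_catalanData_eq_factorial_mul_ncard]
    push_cast; rfl
  have hc₀ : c 0 = 0 := by simp [c]
  have hF' : F = mk fun n => c n / n ! := by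
    ext n
    rw [hF, coeff_mk]
    split_ifs with hn
    · simp [hn, hc₀]
    · rw [show c n = coloringWeight c 1 (Fin n) by rw [coloringWeight_one, Fintype.card_fin],
        ← hcount]
      simp
  obtain ⟨k, rfl⟩ := Nat.exists_eq_add_of_le' hk
  have hFk' : ((k + 1)! : ℚ⟦X⟧) * Fk = mk fun n => coloringWeight c (k + 1) (Fin n) / n ! := by
    ext n
    rw [← map_natCast (C (R := ℚ)), coeff_C_mul, hFk, coeff_mk]
    split_ifs with hn
    · simp [hn, coloringWeight_fin_succ, hc₀]
    · rw [← hcount, mul_div_assoc]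
  rw [hFk', hF', mk_coloringWeight_eq_pow]
end

section
/- Fix an integer m ≥ 0. In ℚ⟦X⟧, let F be the power series whose coefficient of X^n is |L_1(C^m_n)|/n! for n ≥ 1 and 0 for n = 0, and let G be the power series whose coefficient of X^n is |L(C^m_n)|/n! for n ≥ 1 and 1 for n = 0, where |L_1(C^m_n)| and |L(C^m_n)| are respectively the numbers of 1-dimensional flats and of all flats of the n-dimensional extended Catalan arrangement. Then G equals the substitution of F into the exponential power series exp(X) = ∑_{n≥0} X^n/n! (the substitution is well defined since F has zero constant term). -/
open Set

/-- Substitution of the power series `g` (with zero constant term) into `f`: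
the coefficient of `X^N` in `f ∘ g` is `∑_{i ≤ N} (coeff i f) · (coeff N (g^i))`
(for `g` with zero constant term, `coeff N (g^i) = 0` whenever `i > N`). -/
noncomputable def psSubst (g f : PowerSeries ℚ) : PowerSeries ℚ :=
  PowerSeries.mk fun N =>
    ∑ i ∈ Finset.range (N + 1), PowerSeries.coeff i f * PowerSeries.coeff N (g ^ i)

/-!
A flat of `C^m_n` is cut out by equations `x i - x j = a` with integer `a`, so it is determined
by the partition of the coordinates that it ties together and by integer offsets on each block,
normalised to vanish at the least element of the block. These data come from a flat exactly when
every block is connected by steps along which the offsets change by at most `m`, and the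
dimension of the flat is the number of blocks. Splitting off the block of the first coordinate
gives `b (n + 1) = ∑ j, (n choose j) * a (j + 1) * b (n - j)`, where `a k` counts the one-block
data (the 1-dimensional flats) and `b k` all flats. For the exponential generating functions this
says `G' = F' * G`; as `exp ∘ F` solves the same equation with the same constant term,
`G = exp ∘ F`.
-/

open Finset.HasAntidiagonal

namespace PowerSeries

open Nat

theorem eq_of_derivative_eq_mul {R : Type*} [CommRing R] [IsAddTorsionFree R] {A B D : R⟦X⟧}
    (hA : d⁄dX R A = A * D) (hB : d⁄dX R B = B * D) (h0 : constantCoeff A = constantCoeff B) :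
    A = B := by
  rw [← sub_eq_zero]
  have hE : d⁄dX R (A - B) = (A - B) * D := by rw [map_sub, hA, hB, sub_mul]
  ext n
  induction n using Nat.strong_induction_on with
  | _ n ih =>
    rcases n with _ | n
    · simpa [sub_eq_zero] using h0
    have hn : coeff n (d⁄dX R (A - B)) = 0 := by
      rw [hE, coeff_mul]
      exact Finset.sum_eq_zero fun p hp => by
        rw [ih p.1 (Finset.Nat.antidiagonal.fst_lt hp), map_zero, zero_mul]
    rw [coeff_derivative, ← Nat.cast_succ, mul_comm, ← nsmul_eq_mul] at hn
    simpa using (smul_eq_zero.1 hn).resolve_left n.succ_ne_zero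

theorem psSubst_eq_subst {g f : ℚ⟦X⟧} (hg : constantCoeff g = 0) :
    psSubst g f = f.subst g := by
  ext N
  rw [psSubst, coeff_mk, coeff_subst' (HasSubst.of_constantCoeff_zero' hg),
    finsum_eq_sum_of_support_subset (s := Finset.range (N + 1))]
  · simp only [smul_eq_mul]
  · intro d hd
    rw [Function.mem_support] at hd
    rw [Finset.coe_range, Set.mem_Iio, Nat.lt_succ_iff]
    by_contra! hNd
    have hdvd : X ^ d ∣ g ^ d := pow_dvd_pow_of_dvd (X_dvd_iff.2 hg) d
    exact hd (by rw [X_pow_dvd_iff.1 hdvd N hNd, smul_zero])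

variable {K : Type*} [Field K]

noncomputable def egf (a : ℕ → K) : K⟦X⟧ := mk fun n => a n / n !

theorem coeff_egf (a : ℕ → K) (n : ℕ) : coeff n (egf a) = a n / n ! := coeff_mk _ _

theorem coeff_derivative_egf [CharZero K] (a : ℕ → K) (n : ℕ) :
    coeff n (d⁄dX K (egf a)) = a (n + 1) / n ! := by
  rw [coeff_derivative, coeff_egf, factorial_succ]
  push_cast
  field_simp

theorem derivative_egf_of_binomial_recurrence [CharZero K] {a b : ℕ → K}
    (h : ∀ n, b (n + 1) = ∑ p ∈ antidiagonal n, n.choose p.1 * a (p.1 + 1) * b p.2) :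
    d⁄dX K (egf b) = d⁄dX K (egf a) * egf b := by
  ext n
  rw [coeff_derivative_egf, h, coeff_mul, Finset.sum_div]
  refine Finset.sum_congr rfl fun p hp => ?_
  obtain rfl := mem_antidiagonal.1 hp
  have := (p.1 + p.2).factorial_ne_zero
  rw [coeff_derivative_egf, coeff_egf, cast_add_choose]
  field_simp

end PowerSeries

theorem Finset.sum_filter_mem_apply_card {α M : Type*} [Fintype α] [DecidableEq α]
    [AddCommMonoid M] (a : α) {n : ℕ} (hα : Fintype.card α = n + 1) (f : ℕ → M) :
    ∑ S : Finset α with a ∈ S, f S.card =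
      ∑ k ∈ Finset.range (n + 1), n.choose k • f (k + 1) := by
  have ha : a ∉ Finset.univ.erase a := Finset.notMem_erase a _
  have hT : ∀ T ∈ (Finset.univ.erase a).powerset, a ∉ T := fun T hT h =>
    ha (Finset.mem_powerset.1 hT h)
  rw [Finset.sum_filter, ← Finset.powerset_univ, ← Finset.insert_erase (Finset.mem_univ a),
    Finset.sum_powerset_insert ha, Finset.sum_eq_zero fun T hT' => if_neg (hT T hT'), zero_add,
    Finset.sum_congr rfl fun T hT' => by
      rw [if_pos (Finset.mem_insert_self a T), Finset.card_insert_of_notMem (hT T hT')],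
    Finset.sum_powerset_apply_card (fun k => f (k + 1)),
    Finset.card_erase_of_mem (Finset.mem_univ a), Finset.card_univ, hα, Nat.add_sub_cancel]

theorem Relation.ReflTransGen.onFun_of_mem_range {α β : Type*} {r : β → β → Prop} {f : α → β}
    (hf : Function.Injective f) (hr : ∀ x y, r x y → x ∈ range f → y ∈ range f) {a b : α}
    (h : ReflTransGen r (f a) (f b)) : ReflTransGen (fun x y => r (f x) (f y)) a b := by
  suffices ∀ y, ReflTransGen r (f a) y →
      ∃ c, f c = y ∧ ReflTransGen (fun x y => r (f x) (f y)) a c by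
    obtain ⟨c, hc, hac⟩ := this _ h
    rwa [hf hc] at hac
  intro y hy
  induction hy with
  | refl => exact ⟨a, rfl, .refl⟩
  | tail _ hyz ih =>
    obtain ⟨c, rfl, hac⟩ := ih
    obtain ⟨d, rfl⟩ := hr _ _ hyz ⟨c, rfl⟩
    exact ⟨d, rfl, hac.tail hyz⟩

namespace CatalanArrangement

open Relation

section FlatParams

variable (m : ℕ) {ι κ : Type*}

def stepRel (s : Setoid ι) (u : ι → ℤ) (i j : ι) : Prop :=
  s i j ∧ |u i - u j| ≤ m

instance (s : Setoid ι) (u : ι → ℤ) : Std.Symm (stepRel m s u) :=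
  ⟨fun _ _ h => ⟨s.symm h.1, abs_sub_comm (α := ℤ) _ _ ▸ h.2⟩⟩

def IsNormalized [LinearOrder ι] (s : Setoid ι) (u : ι → ℤ) : Prop :=
  ∀ i, (∀ j, s i j → i ≤ j) → u i = 0

/-- `(s, u)` encodes the flat `{x | x i - x j = u i - u j whenever s i j}`. -/
def flatParams (ι : Type*) [LinearOrder ι] : Set (Setoid ι × (ι → ℤ)) :=
  {p | (∀ i j, p.1 i j → ReflTransGen (stepRel m p.1 p.2) i j) ∧ IsNormalized p.1 p.2}

def blockLabels (ι : Type*) [LinearOrder ι] : Set (ι → ℤ) :=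
  {u | (⊤, u) ∈ flatParams m ι}

variable {m} [LinearOrder ι] [LinearOrder κ]

theorem mem_blockLabels {u : ι → ℤ} : u ∈ blockLabels m ι ↔ (⊤, u) ∈ flatParams m ι := Iff.rfl

theorem comap_mem_flatParams (f : κ ↪o ι) {s : Setoid ι} {u : ι → ℤ}
    (h : (s, u) ∈ flatParams m ι) (hf : ∀ i j, s i j → i ∈ range f → j ∈ range f) :
    (s.comap f, u ∘ f) ∈ flatParams m κ := by
  refine ⟨fun a b hab => ReflTransGen.onFun_of_mem_range f.injective
    (fun x y hxy => hf x y hxy.1) (h.1 _ _ hab), fun a ha => h.2 (f a) fun j hj => ?_⟩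
  obtain ⟨b, rfl⟩ := hf _ _ hj ⟨a, rfl⟩
  exact f.le_iff_le.2 (ha b hj)

theorem comap_orderIso_mem_flatParams_iff (e : κ ≃o ι) {s : Setoid ι} {u : ι → ℤ} :
    (s.comap e, u ∘ e) ∈ flatParams m κ ↔ (s, u) ∈ flatParams m ι := by
  refine ⟨fun h => ?_, fun h => comap_mem_flatParams e.toOrderEmbedding h (by simp)⟩
  have := comap_mem_flatParams e.symm.toOrderEmbedding h (by simp)
  convert this using 2
  · ext; simp [Setoid.comap_rel]
  · ext; simp

def flatParamsCongr (e : κ ≃o ι) : flatParams m κ ≃ flatParams m ι where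
  toFun p := ⟨(p.1.1.comap e.symm, p.1.2 ∘ e.symm),
    (comap_orderIso_mem_flatParams_iff e.symm).2 p.2⟩
  invFun p := ⟨(p.1.1.comap e, p.1.2 ∘ e), (comap_orderIso_mem_flatParams_iff e).2 p.2⟩
  left_inv p := by ext <;> simp [Setoid.comap_rel]
  right_inv p := by ext <;> simp [Setoid.comap_rel]

theorem mem_flatParams_of_forall_saturated {s : Setoid ι} {u : ι → ℤ}
    (h : ∀ i, ∃ q : ι → Prop, q i ∧ (∀ a b, s a b → q a → q b) ∧
      (s.comap ((↑) : Subtype q → ι), u ∘ (↑)) ∈ flatParams m (Subtype q)) :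
    (s, u) ∈ flatParams m ι := by
  refine ⟨fun i j hij => ?_, fun i hi => ?_⟩
  · obtain ⟨q, hqi, hq, hp⟩ := h i
    exact ReflTransGen.lift (p := stepRel m s u) Subtype.val (fun _ _ hab => hab) _ _
      (hp.1 ⟨i, hqi⟩ ⟨j, hq i j hij hqi⟩ hij)
  · obtain ⟨q, hqi, -, hp⟩ := h i
    exact hp.2 ⟨i, hqi⟩ fun b hb => hi b hb

end FlatParams

section Flat

variable {ι : Type*}

theorem exists_min_class [LinearOrder ι] [WellFoundedLT ι] (s : Setoid ι) (i : ι) :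
    ∃ j, s i j ∧ ∀ k, s j k → j ≤ k := by
  obtain ⟨j, hij, hmin⟩ := WellFounded.has_min wellFounded_lt {j | s i j} ⟨i, s.refl i⟩
  exact ⟨j, hij, fun k hjk => not_lt.1 (hmin k (s.trans hij hjk))⟩

theorem card_quotient_eq_one_iff [Nonempty ι] {s : Setoid ι} :
    Nat.card (Quotient s) = 1 ↔ s = ⊤ := by
  rw [Nat.card_eq_one_iff_unique, ← Quotient.subsingleton_iff]
  exact ⟨And.left, fun h => ⟨h, ‹Nonempty ι›.map (Quotient.mk s)⟩⟩

def classSubmodule (s : Setoid ι) : Submodule ℝ (ι → ℝ) :=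
  LinearMap.range (LinearMap.funLeft ℝ ℝ (Quotient.mk s))

theorem mem_classSubmodule {s : Setoid ι} {y : ι → ℝ} :
    y ∈ classSubmodule s ↔ ∀ i j, s i j → y i = y j := by
  refine ⟨?_, fun h => ⟨Quotient.lift y h, rfl⟩⟩
  rintro ⟨g, rfl⟩ i j hij
  exact congrArg g (Quotient.sound hij)

theorem rel_iff_forall_mem_classSubmodule {s : Setoid ι} {i j : ι} :
    s i j ↔ ∀ y ∈ classSubmodule s, y i = y j := by
  classical
  refine ⟨fun hij y hy => mem_classSubmodule.1 hy i j hij, fun h => ?_⟩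
  have hy : (fun k => if s i k then (1 : ℝ) else 0) ∈ classSubmodule s :=
    mem_classSubmodule.2 fun a b hab => by
      simp only [show s i a ↔ s i b from
        ⟨fun h => s.trans h hab, fun h => s.trans h (s.symm hab)⟩]
  simpa [s.refl i] using h _ hy

theorem classSubmodule_injective : Function.Injective (classSubmodule (ι := ι)) :=
  fun s t h => Setoid.ext fun _ _ => by
    rw [rel_iff_forall_mem_classSubmodule, rel_iff_forall_mem_classSubmodule, h]

theorem finrank_classSubmodule [Finite ι] (s : Setoid ι) :
    Module.finrank ℝ (classSubmodule s) = Nat.card (Quotient s) := by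
  classical
  have := Fintype.ofFinite ι
  rw [classSubmodule, LinearMap.finrank_range_of_inj
    (LinearMap.funLeft_injective_of_surjective _ _ _ Quotient.mk_surjective),
    Module.finrank_fintype_fun_eq_card, Nat.card_eq_fintype_card]

def flat (s : Setoid ι) (u : ι → ℤ) : AffineSubspace ℝ (ι → ℝ) :=
  AffineSubspace.mk' (fun i => (u i : ℝ)) (classSubmodule s)

theorem mem_flat {s : Setoid ι} {u : ι → ℤ} {x : ι → ℝ} :
    x ∈ flat s u ↔ ∀ i j, s i j → x i - x j = u i - u j := by
  simp only [flat, AffineSubspace.mem_mk', mem_classSubmodule, vsub_eq_sub, Pi.sub_apply,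
    sub_eq_sub_iff_sub_eq_sub]

variable [LinearOrder ι] [WellFoundedLT ι] {m : ℕ}

theorem eq_of_isNormalized {s : Setoid ι} {u u' : ι → ℤ}
    (hu : IsNormalized s u) (hu' : IsNormalized s u')
    (h : ∀ i j, s i j → u i - u' i = u j - u' j) : u = u' := by
  funext i
  obtain ⟨j, hij, hmin⟩ := exists_min_class s i
  have := h i j hij
  rw [hu j hmin, hu' j hmin] at this
  omega

theorem flat_inj_of_isNormalized {s s' : Setoid ι} {u u' : ι → ℤ}
    (hu : IsNormalized s u) (hu' : IsNormalized s' u') (h : flat s u = flat s' u') :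
    s = s' ∧ u = u' := by
  obtain rfl : s = s' := classSubmodule_injective <| by
    simpa [flat] using congrArg AffineSubspace.direction h
  have hmem := mem_flat.1 (h ▸ AffineSubspace.self_mem_mk' _ _ :
    (fun i => (u' i : ℝ)) ∈ flat s u)
  refine ⟨rfl, eq_of_isNormalized hu hu' fun i j hij => ?_⟩
  have := hmem i j hij
  exact_mod_cast (by push_cast; linarith : ((u i - u' i : ℤ) : ℝ) = ((u j - u' j : ℤ) : ℝ))

theorem injOn_coe_flat :
    InjOn (fun p : Setoid ι × (ι → ℤ) => (flat p.1 p.2 : Set (ι → ℝ))) (flatParams m ι) :=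
  fun _ hp _ hq h =>
    Prod.ext_iff.2 (flat_inj_of_isNormalized hp.2 hq.2 (SetLike.coe_injective h))

theorem exists_mem_flatParams_flat_eq {s : Setoid ι} {w : ι → ℤ}
    (hw : ∀ i j, s i j → ReflTransGen (stepRel m s w) i j) :
    ∃ u, (s, u) ∈ flatParams m ι ∧ flat s u = flat s w := by
  choose c hc hmin using exists_min_class s
  have hcc : ∀ i j, s i j → c i = c j := fun i j hij =>
    le_antisymm (hmin i _ (s.trans (s.symm (hc i)) (s.trans hij (hc j))))
      (hmin j _ (s.trans (s.symm (hc j)) (s.trans (s.symm hij) (hc i))))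
  have hdiff : ∀ i j, s i j → w i - w (c i) - (w j - w (c j)) = w i - w j := fun i j hij => by
    rw [hcc i j hij]; ring
  refine ⟨fun i => w i - w (c i), ⟨fun i j hij => ?_, fun i hi => ?_⟩, ?_⟩
  · refine ReflTransGen.mono ?_ _ _ (hw i j hij)
    intro a b hab
    exact ⟨hab.1, by simpa only [hdiff a b hab.1] using hab.2⟩
  · show w i - w (c i) = 0
    rw [le_antisymm (hmin i i (s.symm (hc i))) (hi _ (hc i)), sub_self]
  · ext x
    simp only [mem_flat]
    refine forall₂_congr fun i j => forall_congr' fun hij => ?_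
    have := congrArg (Int.cast : ℤ → ℝ) (hdiff i j hij)
    push_cast at this ⊢
    rw [this]

end Flat

section Catalan

variable {m n : ℕ}

theorem flatDim_flat (s : Setoid (Fin n)) (u : Fin n → ℤ) :
    flatDim (flat s u : Set (Fin n → ℝ)) = Nat.card (Quotient s) := by
  rw [flatDim, AffineSubspace.affineSpan_coe, flat, AffineSubspace.direction_mk',
    finrank_classSubmodule]

theorem coe_flat_mem_flats {s : Setoid (Fin n)} {u : Fin n → ℤ}
    (h : (s, u) ∈ flatParams m (Fin n)) :
    (flat s u : Set (Fin n → ℝ)) ∈ flats (CatalanArr m n) := by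
  refine ⟨⟨_, AffineSubspace.self_mem_mk' _ _⟩,
    {H | ∃ i j, i < j ∧ stepRel m s u i j ∧ H = hyp n i j (u i - u j)}, ?_, ?_⟩
  · rintro _ ⟨i, j, hij, hstep, rfl⟩
    exact ⟨i, j, _, hij, (abs_le.1 hstep.2).1, (abs_le.1 hstep.2).2, rfl⟩
  ext x
  simp only [SetLike.mem_coe, mem_flat, Set.mem_sInter]
  constructor
  · rintro hx _ ⟨i, j, -, hstep, rfl⟩
    simp [hyp, hx i j hstep.1]
  intro hx
  have hstep : ∀ i j, stepRel m s u i j → x i - x j = u i - u j := by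
    intro i j hij
    rcases lt_trichotomy i j with hlt | rfl | hgt
    · simpa [hyp] using hx _ ⟨i, j, hlt, hij, rfl⟩
    · simp
    · have : x j - x i = u j - u i := by simpa [hyp] using hx _ ⟨j, i, hgt, symm hij, rfl⟩
      linarith
  intro i j hij
  obtain hpath := h.1 i j hij
  clear hij
  induction hpath with
  | refl => simp
  | tail _ hbc ih => linarith [hstep _ _ hbc]

variable (m) in
def linkSetoid (B : Set (Set (Fin n → ℝ))) : Setoid (Fin n) :=
  EqvGen.setoid fun i j => ∃ a : ℤ, |a| ≤ m ∧ hyp n i j a ∈ B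

theorem sub_eq_sub_of_linkSetoid {B : Set (Set (Fin n → ℝ))} {x y : Fin n → ℝ}
    (hx : x ∈ ⋂₀ B) (hy : y ∈ ⋂₀ B) {i j : Fin n} (hij : linkSetoid m B i j) :
    x i - x j = y i - y j := by
  have : linkSetoid m B ≤ Setoid.ker fun i => x i - y i :=
    Setoid.eqvGen_le fun i j ⟨a, _, ha⟩ => by
      have h₁ : x i - x j = a := hx _ ha
      have h₂ : y i - y j = a := hy _ ha
      simp only [Setoid.ker_def]
      linarith
  have := this hij
  simp only [Setoid.ker_def] at this
  linarith

-- The fractional parts of `x` agree along every link, hence on every block.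
theorem sub_eq_floor_sub_floor_of_linkSetoid {B : Set (Set (Fin n → ℝ))} {x : Fin n → ℝ}
    (hx : x ∈ ⋂₀ B) {i j : Fin n} (hij : linkSetoid m B i j) :
    x i - x j = ⌊x i⌋ - ⌊x j⌋ := by
  have : linkSetoid m B ≤ Setoid.ker (Int.fract ∘ x) :=
    Setoid.eqvGen_le fun i j ⟨a, _, ha⟩ => Int.fract_eq_fract.2 ⟨a, hx _ ha⟩
  have := this hij
  simp only [Setoid.ker_def, Function.comp, Int.fract] at this
  linarith

theorem sInter_eq_flat_linkSetoid {B : Set (Set (Fin n → ℝ))} (hB : B ⊆ CatalanArr m n)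
    {x₀ : Fin n → ℝ} (hx₀ : x₀ ∈ ⋂₀ B) :
    ⋂₀ B = flat (linkSetoid m B) fun i => ⌊x₀ i⌋ := by
  ext x
  rw [SetLike.mem_coe, mem_flat]
  refine ⟨fun hx i j hij => ?_, fun hx H hH => ?_⟩
  · rw [sub_eq_sub_of_linkSetoid hx hx₀ hij, sub_eq_floor_sub_floor_of_linkSetoid hx₀ hij]
  · obtain ⟨i, j, a, -, ha₁, ha₂, rfl⟩ := hB hH
    have hij : linkSetoid m B i j := EqvGen.rel _ _ ⟨a, abs_le.2 ⟨ha₁, ha₂⟩, hH⟩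
    show x i - x j = a
    rw [hx i j hij, ← sub_eq_floor_sub_floor_of_linkSetoid hx₀ hij]
    exact hx₀ _ hH

theorem reflTransGen_stepRel_of_linkSetoid {B : Set (Set (Fin n → ℝ))} {x₀ : Fin n → ℝ}
    (hx₀ : x₀ ∈ ⋂₀ B) {i j : Fin n} (hij : linkSetoid m B i j) :
    ReflTransGen (stepRel m (linkSetoid m B) fun i => ⌊x₀ i⌋) i j := by
  rw [← EqvGen.eqvGen_eq_reflTransGen]
  refine EqvGen.mono ?_ _ _ hij
  rintro i j ⟨a, ha, haB⟩
  have hij : linkSetoid m B i j := EqvGen.rel _ _ ⟨a, ha, haB⟩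
  have : ((⌊x₀ i⌋ - ⌊x₀ j⌋ : ℤ) : ℝ) = a := by
    rw [Int.cast_sub, ← sub_eq_floor_sub_floor_of_linkSetoid hx₀ hij]
    exact hx₀ _ haB
  exact ⟨hij, by rwa [Int.cast_inj.1 this]⟩

theorem exists_mem_flatParams_of_mem_flats {F : Set (Fin n → ℝ)}
    (hF : F ∈ flats (CatalanArr m n)) : ∃ p ∈ flatParams m (Fin n), F = flat p.1 p.2 := by
  obtain ⟨⟨x₀, hx₀⟩, B, hB, rfl⟩ := hF
  obtain ⟨u, hu, hflat⟩ := exists_mem_flatParams_flat_eq fun i j =>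
    reflTransGen_stepRel_of_linkSetoid (m := m) hx₀ (i := i) (j := j)
  exact ⟨(linkSetoid m B, u), hu, by rw [sInter_eq_flat_linkSetoid hB hx₀, hflat]⟩

theorem flats_catalanArr_eq_image :
    flats (CatalanArr m n) =
      (fun p : Setoid (Fin n) × (Fin n → ℤ) => (flat p.1 p.2 : Set (Fin n → ℝ))) ''
        flatParams m (Fin n) := by
  ext F
  refine ⟨fun hF => ?_, ?_⟩
  · obtain ⟨p, hp, rfl⟩ := exists_mem_flatParams_of_mem_flats hF
    exact ⟨p, hp, rfl⟩
  · rintro ⟨p, hp, rfl⟩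
    exact coe_flat_mem_flats hp

theorem ncard_flats_catalanArr :
    (flats (CatalanArr m n)).ncard = Nat.card (flatParams m (Fin n)) := by
  rw [flats_catalanArr_eq_image, injOn_coe_flat.ncard_image, Nat.card_coe_set_eq]

theorem ncard_lk_one_catalanArr [NeZero n] :
    (Lk (CatalanArr m n) 1).ncard = Nat.card (blockLabels m (Fin n)) := by
  have himage : Lk (CatalanArr m n) 1 =
      (fun u => (flat ⊤ u : Set (Fin n → ℝ))) '' blockLabels m (Fin n) := by
    ext F
    simp only [Lk, flats_catalanArr_eq_image, Set.mem_image]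
    constructor
    · rintro ⟨⟨⟨s, u⟩, hp, rfl⟩, hdim⟩
      rw [flatDim_flat, card_quotient_eq_one_iff] at hdim
      subst hdim
      exact ⟨u, hp, rfl⟩
    · rintro ⟨u, hu, rfl⟩
      exact ⟨⟨(⊤, u), hu, rfl⟩, by rw [flatDim_flat, card_quotient_eq_one_iff]⟩
  have hinj : InjOn (fun u => (flat ⊤ u : Set (Fin n → ℝ))) (blockLabels m (Fin n)) :=
    fun u hu v hv h => congrArg Prod.snd (injOn_coe_flat (x₁ := (⊤, u)) hu (x₂ := (⊤, v)) hv h)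
  rw [himage, hinj.ncard_image, Nat.card_coe_set_eq]

theorem flats_finite {A : Set (Set (Fin n → ℝ))} (hA : A.Finite) : (flats A).Finite :=
  (hA.finite_subsets.image sInter).subset fun _ ⟨_, B, hB, hF⟩ => ⟨B, hB, hF.symm⟩

theorem catalanArr_finite (m n : ℕ) : (CatalanArr m n).Finite := by
  refine (((Set.finite_univ (α := Fin n × Fin n)).prod (Set.finite_Icc (-(m : ℤ)) m)).image
    fun p => hyp n p.1.1 p.1.2 p.2).subset ?_
  rintro _ ⟨i, j, a, -, ha₁, ha₂, rfl⟩
  exact ⟨((i, j), a), ⟨trivial, ha₁, ha₂⟩, rfl⟩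

instance : Finite (flatParams m (Fin n)) :=
  (Set.Finite.of_finite_image (by
    rw [← flats_catalanArr_eq_image]; exact flats_finite (catalanArr_finite m n))
    injOn_coe_flat).to_subtype

end Catalan

section Counting

variable {m : ℕ} {ι : Type*} [LinearOrder ι]

instance [Fintype ι] : Finite (flatParams m ι) :=
  Finite.of_equiv _ (flatParamsCongr (Fintype.orderIsoFinOfCardEq ι rfl))

theorem card_flatParams_eq_card_fin [Fintype ι] :
    Nat.card (flatParams m ι) = Nat.card (flatParams m (Fin (Fintype.card ι))) :=
  Nat.card_congr (flatParamsCongr (Fintype.orderIsoFinOfCardEq ι rfl)).symm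

theorem card_blockLabels_eq_card_fin [Fintype ι] :
    Nat.card (blockLabels m ι) = Nat.card (blockLabels m (Fin (Fintype.card ι))) := by
  let e := Fintype.orderIsoFinOfCardEq ι rfl
  refine Nat.card_congr
    (Equiv.subtypeEquiv (e.symm.toEquiv.arrowCongr (Equiv.refl ℤ)) fun u => ?_)
  rw [mem_blockLabels, mem_blockLabels, ← comap_orderIso_mem_flatParams_iff e]
  rfl

variable {S : Finset ι}

variable (S) in
theorem mem_flatParams_iff_restrict {s : Setoid ι} {u : ι → ℤ}
    (hS : ∀ a b, s a b → (a ∈ S ↔ b ∈ S)) :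
    (s, u) ∈ flatParams m ι ↔
      (s.comap ((↑) : S → ι), u ∘ (↑)) ∈ flatParams m S ∧
      (s.comap ((↑) : {i // i ∉ S} → ι), u ∘ (↑)) ∈ flatParams m {i // i ∉ S} := by
  refine ⟨fun h => ⟨comap_mem_flatParams (OrderEmbedding.subtype (· ∈ S)) h ?_,
    comap_mem_flatParams (OrderEmbedding.subtype (· ∉ S)) h ?_⟩, fun ⟨h₁, h₂⟩ => ?_⟩
  · rintro a b hab ⟨a, rfl⟩
    exact ⟨⟨b, (hS _ _ hab).1 a.2⟩, rfl⟩
  · rintro a b hab ⟨a, rfl⟩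
    exact ⟨⟨b, mt (hS _ _ hab).2 a.2⟩, rfl⟩
  refine mem_flatParams_of_forall_saturated fun i => ?_
  by_cases hi : i ∈ S
  · exact ⟨(· ∈ S), hi, fun a b hab => (hS a b hab).1, h₁⟩
  · exact ⟨(· ∉ S), hi, fun a b hab => mt (hS a b hab).2, h₂⟩

variable (S) in
/-- `S` is one class, and off `S` the classes are those of `s`. -/
def glueSetoid (s : Setoid {i // i ∉ S}) : Setoid ι :=
  Setoid.ker fun i => if h : i ∈ S then none else some (Quotient.mk s ⟨i, h⟩)

theorem glueSetoid_iff {s : Setoid {i // i ∉ S}} {a b : ι} :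
    glueSetoid S s a b ↔ (a ∈ S ∧ b ∈ S) ∨ ∃ (ha : a ∉ S) (hb : b ∉ S), s ⟨a, ha⟩ ⟨b, hb⟩ := by
  rw [glueSetoid, Setoid.ker_def]
  by_cases ha : a ∈ S <;> by_cases hb : b ∈ S <;> simp [ha, hb, Quotient.eq]

theorem glueSetoid_mem_iff {s : Setoid {i // i ∉ S}} {a b : ι} (h : glueSetoid S s a b) :
    a ∈ S ↔ b ∈ S := by
  rcases glueSetoid_iff.1 h with ⟨ha, hb⟩ | ⟨ha, hb, -⟩ <;> simp [ha, hb]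

theorem comap_glueSetoid_mem (s : Setoid {i // i ∉ S}) :
    (glueSetoid S s).comap ((↑) : S → ι) = ⊤ :=
  Setoid.eq_top_iff.2 fun a b => glueSetoid_iff.2 (Or.inl ⟨a.2, b.2⟩)

theorem comap_glueSetoid_notMem (s : Setoid {i // i ∉ S}) :
    (glueSetoid S s).comap ((↑) : {i // i ∉ S} → ι) = s :=
  Setoid.ext fun a b => by simp [Setoid.comap_rel, glueSetoid_iff, a.2, b.2]

theorem glueSetoid_comap_eq {s : Setoid ι} (hS : ∀ a b, s a b → (a ∈ S ↔ b ∈ S))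
    (hS' : s.comap ((↑) : S → ι) = ⊤) :
    glueSetoid S (s.comap ((↑) : {i // i ∉ S} → ι)) = s := by
  ext a b
  rw [glueSetoid_iff]
  by_cases ha : a ∈ S <;> by_cases hb : b ∈ S
  · simpa [ha, hb, Setoid.comap_rel] using Setoid.eq_top_iff.1 hS' ⟨a, ha⟩ ⟨b, hb⟩
  · simpa [ha, hb] using mt (hS a b) (by simp [ha, hb])
  · simpa [ha, hb] using mt (hS a b) (by simp [ha, hb])
  · simp [ha, hb, Setoid.comap_rel]

variable (S) in
def glueLabels (u₁ : S → ℤ) (u₂ : {i // i ∉ S} → ℤ) : ι → ℤ :=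
  (Equiv.piEquivPiSubtypeProd (· ∈ S) fun _ => ℤ).symm (u₁, u₂)

theorem glueLabels_comp_mem (u₁ : S → ℤ) (u₂ : {i // i ∉ S} → ℤ) :
    glueLabels S u₁ u₂ ∘ (↑) = u₁ :=
  congrArg Prod.fst
    ((Equiv.piEquivPiSubtypeProd (· ∈ S) fun _ => ℤ).apply_symm_apply (u₁, u₂))

theorem glueLabels_comp_notMem (u₁ : S → ℤ) (u₂ : {i // i ∉ S} → ℤ) :
    glueLabels S u₁ u₂ ∘ (↑) = u₂ :=
  congrArg Prod.snd
    ((Equiv.piEquivPiSubtypeProd (· ∈ S) fun _ => ℤ).apply_symm_apply (u₁, u₂))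

theorem glueLabels_comp_val (u : ι → ℤ) : glueLabels S (u ∘ (↑)) (u ∘ (↑)) = u :=
  (Equiv.piEquivPiSubtypeProd (· ∈ S) fun _ => ℤ).symm_apply_apply u

variable [OrderBot ι]

theorem saturated_of_forall_rel_bot_iff {s : Setoid ι} (h : ∀ j, s ⊥ j ↔ j ∈ S) (a b : ι)
    (hab : s a b) : a ∈ S ↔ b ∈ S := by
  rw [← h, ← h]
  exact ⟨fun h' => s.trans h' hab, fun h' => s.trans h' (s.symm hab)⟩

theorem comap_eq_top_of_forall_rel_bot_iff {s : Setoid ι} (h : ∀ j, s ⊥ j ↔ j ∈ S) :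
    s.comap ((↑) : S → ι) = ⊤ :=
  Setoid.eq_top_iff.2 fun a b => s.trans (s.symm ((h a).2 a.2)) ((h b).2 b.2)

def classOfBotEquiv (hS : ⊥ ∈ S) :
    {p : flatParams m ι // ∀ j, p.1.1 ⊥ j ↔ j ∈ S} ≃
      blockLabels m S × flatParams m {i // i ∉ S} where
  toFun p :=
    have h := (mem_flatParams_iff_restrict S (saturated_of_forall_rel_bot_iff p.2)).1 p.1.2
    (⟨p.1.1.2 ∘ (↑), by
      rw [mem_blockLabels, ← comap_eq_top_of_forall_rel_bot_iff p.2]; exact h.1⟩, ⟨_, h.2⟩)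
  invFun q :=
    ⟨⟨(glueSetoid S q.2.1.1, glueLabels S q.1.1 q.2.1.2),
      (mem_flatParams_iff_restrict S fun _ _ => glueSetoid_mem_iff).2
        ⟨by rw [comap_glueSetoid_mem, glueLabels_comp_mem]; exact q.1.2,
          by rw [comap_glueSetoid_notMem, glueLabels_comp_notMem]; exact q.2.2⟩⟩,
      fun j => by simp [glueSetoid_iff, hS]⟩
  left_inv p := Subtype.ext <| Subtype.ext <| Prod.ext
    (glueSetoid_comap_eq (saturated_of_forall_rel_bot_iff p.2)
      (comap_eq_top_of_forall_rel_bot_iff p.2))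
    (glueLabels_comp_val _)
  right_inv q := Prod.ext (Subtype.ext (glueLabels_comp_mem _ _))
    (Subtype.ext (Prod.ext (comap_glueSetoid_notMem _) (glueLabels_comp_notMem _ _)))

theorem card_flatParams_eq_sum [Fintype ι] :
    Nat.card (flatParams m ι) = ∑ S : Finset ι with ⊥ ∈ S,
      Nat.card (blockLabels m S) * Nat.card (flatParams m {i // i ∉ S}) := by
  classical
  let key : flatParams m ι → Finset ι := fun p => {j | p.1.1 ⊥ j}
  have hkey : ∀ S p, key p = S ↔ ∀ j, p.1.1 ⊥ j ↔ j ∈ S := fun S p => by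
    simp [key, Finset.ext_iff]
  rw [← Nat.card_congr (Equiv.sigmaFiberEquiv key), Nat.card_sigma, Finset.sum_filter]
  refine Finset.sum_congr rfl fun S _ => ?_
  split_ifs with hS
  · rw [Nat.card_congr ((Equiv.subtypeEquivRight (hkey S)).trans (classOfBotEquiv hS)),
      Nat.card_prod]
  · rw [Nat.card_eq_zero]
    exact Or.inl ⟨fun p => hS (((hkey S p.1).1 p.2 ⊥).1 (p.1.1.1.refl ⊥))⟩

theorem card_flatParams_succ (n : ℕ) :
    Nat.card (flatParams m (Fin (n + 1))) = ∑ p ∈ antidiagonal n,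
      n.choose p.1 * Nat.card (blockLabels m (Fin (p.1 + 1))) *
        Nat.card (flatParams m (Fin p.2)) := by
  have hcard : ∀ S : Finset (Fin (n + 1)),
      Nat.card (blockLabels m S) * Nat.card (flatParams m {i // i ∉ S}) =
        Nat.card (blockLabels m (Fin S.card)) * Nat.card (flatParams m (Fin (n + 1 - S.card))) :=
    fun S => by
      rw [card_blockLabels_eq_card_fin, card_flatParams_eq_card_fin, Fintype.card_subtype_compl,
        Fintype.card_coe, Fintype.card_fin]
  rw [card_flatParams_eq_sum, bot_eq_zero]
  simp only [hcard]
  rw [Finset.sum_filter_mem_apply_card 0 (Fintype.card_fin _)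
    (fun k => Nat.card (blockLabels m (Fin k)) * Nat.card (flatParams m (Fin (n + 1 - k)))),
    Finset.Nat.sum_antidiagonal_eq_sum_range_succ (fun i j =>
      n.choose i * Nat.card (blockLabels m (Fin (i + 1))) * Nat.card (flatParams m (Fin j)))]
  refine Finset.sum_congr rfl fun k _ => ?_
  rw [smul_eq_mul, mul_assoc, Nat.add_sub_add_right]

end Counting

theorem ncard_flats_catalanArr_zero (m : ℕ) : (flats (CatalanArr m 0)).ncard = 1 := by
  rw [ncard_flats_catalanArr, Nat.card_eq_one_iff_unique]
  exact ⟨⟨fun p q => Subtype.ext <|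
      Prod.ext (Setoid.ext fun i => i.elim0) (funext fun i => i.elim0)⟩,
    ⟨⟨(⊤, 0), fun i => i.elim0, fun i => i.elim0⟩⟩⟩

theorem ncard_flats_catalanArr_succ (m n : ℕ) :
    (flats (CatalanArr m (n + 1))).ncard = ∑ p ∈ antidiagonal n,
      n.choose p.1 * (Lk (CatalanArr m (p.1 + 1)) 1).ncard * (flats (CatalanArr m p.2)).ncard := by
  simp only [ncard_flats_catalanArr, ncard_lk_one_catalanArr, card_flatParams_succ]

end CatalanArrangement

open PowerSeries CatalanArrangement in
/-- If `F ∈ ℚ⟦X⟧` is the exponential generating function of `|L_1(C^m_n)|` (with zero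
constant term) and `G` is the exponential generating function of `|L(C^m_n)|` (with
constant term `1`), then `G = exp ∘ F`. -/
theorem catalan_egf_exp (m : ℕ) (F G : PowerSeries ℚ)
    (hF : ∀ n : ℕ, PowerSeries.coeff n F =
      if n = 0 then 0 else ((Lk (CatalanArr m n) 1).ncard : ℚ) / n.factorial)
    (hG : ∀ n : ℕ, PowerSeries.coeff n G =
      if n = 0 then 1 else ((flats (CatalanArr m n)).ncard : ℚ) / n.factorial) :
    G = psSubst F (PowerSeries.exp ℚ) := by
  have hF0 : constantCoeff F = 0 := by simpa using hF 0
  have hGegf : G = egf fun n => ((flats (CatalanArr m n)).ncard : ℚ) := by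
    ext (_ | n)
    · simp [hG, coeff_egf, ncard_flats_catalanArr_zero]
    · simp [hG, coeff_egf]
  have hFegf : d⁄dX ℚ F = d⁄dX ℚ (egf fun n => ((Lk (CatalanArr m n) 1).ncard : ℚ)) := by
    ext n
    simp [coeff_derivative, hF, coeff_egf]
  rw [psSubst_eq_subst hF0]
  refine eq_of_derivative_eq_mul (D := d⁄dX ℚ F) ?_ ?_ ?_
  · rw [hGegf, mul_comm, hFegf]
    exact derivative_egf_of_binomial_recurrence fun n => by
      exact_mod_cast ncard_flats_catalanArr_succ m n
  · rw [derivative_subst (HasSubst.of_constantCoeff_zero' hF0), derivative_exp]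
  · rw [← psSubst_eq_subst hF0]
    simpa [psSubst] using hG 0
end

section
/- Fix integers m ≥ 0 and n ≥ 1. Call a function h : {1, …, n} → ℕ Catalan-admissible (for m) if 0 belongs to the range of h and for every a in the range of h with a < max(range h) there exists b in the range of h with a < b ≤ a + m. Then the map sending h to the affine subspace {x ∈ ℝ^n : x_i + h(i) = x_j + h(j) for all i, j} is a bijection from the set of Catalan-admissible functions onto the set L_1(C^m_n) of 1-dimensional flats of the extended Catalan arrangement C^m_n. -/
/-!
Every hyperplane `x i - x j = a` is invariant under translation by `(1, …, 1)`, so a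
one-dimensional flat through `x₀` is exactly the line `x₀ + ℝ (1, …, 1)`. Perturbing `x₀` by
the indicator of a set of coordinates shows that the graph on `Fin n` whose edges are the
hyperplanes cutting out such a flat is connected; hence the differences `x₀ i - x₀ j` are
integers, and `h := max x₀ - x₀` is a natural-valued function with a zero. Its edges join values
at distance at most `m`, and connectivity of the graph "`|h i - h j| ≤ m`" is precisely
Catalan-admissibility: a gap of more than `m` above a value below the maximum would split it.
-/

open Set

/-- A function `h : {1,…,n} → ℕ` is Catalan-admissible (for `m`) if `0` is in its range
and every value `a` of `h` below the maximum value is followed by some value `b` of `h`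
with `a < b ≤ a + m`. -/
def CatalanAdmissible (m : ℕ) {n : ℕ} (h : Fin n → ℕ) : Prop :=
  0 ∈ Set.range h ∧
    ∀ a ∈ Set.range h, a < sSup (Set.range h) →
      ∃ b ∈ Set.range h, a < b ∧ b ≤ a + m


theorem subset_of_coe_subset_of_finrank_direction_le {k V P : Type*} [DivisionRing k]
    [AddCommGroup V] [Module k V] [FiniteDimensional k V] [AddTorsor V P]
    {s : Set P} {Q : AffineSubspace k P} (hQs : (Q : Set P) ⊆ s) (hQ : (Q : Set P).Nonempty)
    (hdim : Module.finrank k (affineSpan k s).direction ≤ Module.finrank k Q.direction) :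
    s ⊆ Q := by
  have hle : Q ≤ affineSpan k s := Q.affineSpan_coe ▸ affineSpan_mono k hQs
  have hdir : Q.direction = (affineSpan k s).direction :=
    Submodule.eq_of_le_of_finrank_le (AffineSubspace.direction_le hle) hdim
  rw [AffineSubspace.eq_of_direction_eq_of_nonempty_of_le hdir hQ hle]
  exact subset_affineSpan k s

def IsConnectedRel {ι : Type*} (r : ι → ι → Prop) : Prop :=
  ∀ S : Set ι, (∀ i j, r i j → (i ∈ S ↔ j ∈ S)) → ∀ i ∈ S, ∀ j, j ∈ S

namespace IsConnectedRel

variable {ι : Type*} {r s : ι → ι → Prop}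

theorem mono (hr : IsConnectedRel r) (hrs : ∀ i j, r i j → s i j ∨ s j i) :
    IsConnectedRel s := fun S hS =>
  hr S fun i j hij => (hrs i j hij).elim (hS i j) fun h => (hS j i h).symm

theorem eq {α : Type*} (hr : IsConnectedRel r) {f : ι → α} (hf : ∀ i j, r i j → f i = f j)
    (i j : ι) : f i = f j :=
  hr {k | f i = f k} (fun p q hpq => by simp only [Set.mem_ofPred_eq, hf p q hpq]) i rfl j

theorem exists_nat_eq_sub (hr : IsConnectedRel r) {x : ι → ℝ}
    (hint : ∀ i j, r i j → ∃ a : ℤ, x i - x j = a) {i₀ : ι} (hmax : ∀ j, x j ≤ x i₀) :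
    ∃ h : ι → ℕ, ∀ j, (h j : ℝ) = x i₀ - x j := by
  suffices ∀ j, ∃ k : ℕ, (k : ℝ) = x i₀ - x j by
    choose h hh using this
    exact ⟨h, hh⟩
  intro j
  have hS : ∀ p q, r p q → ((∃ z : ℤ, x i₀ - x p = z) ↔ ∃ z : ℤ, x i₀ - x q = z) := by
    intro p q hpq
    obtain ⟨a, ha⟩ := hint p q hpq
    constructor
    · rintro ⟨z, hz⟩
      exact ⟨z + a, by push_cast; linarith⟩
    · rintro ⟨z, hz⟩
      exact ⟨z - a, by push_cast; linarith⟩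
  obtain ⟨z, hz⟩ := hr {k | ∃ z : ℤ, x i₀ - x k = z} hS i₀ ⟨0, by simp⟩ j
  lift z to ℕ using (by exact_mod_cast hz ▸ sub_nonneg.2 (hmax j))
  exact ⟨z, by simp [hz]⟩

end IsConnectedRel

section Catalan

variable {m n : ℕ}

theorem IsConnectedRel.of_catalanAdmissible {h : Fin n → ℕ} (hh : CatalanAdmissible m h) :
    IsConnectedRel fun i j => h i ≤ h j ∧ h j ≤ h i + m := by
  intro S hS
  -- climb from `h i` towards `h j` in steps of at most `m` through values of `h`
  have climb : ∀ d, ∀ i j, h i ≤ h j → h j - h i = d → (i ∈ S ↔ j ∈ S) := by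
    intro d
    induction d using Nat.strong_induction_on with
    | _ d ih =>
      intro i j hij hd
      by_cases hstep : h j ≤ h i + m
      · exact hS i j ⟨hij, hstep⟩
      have hlt : h i < sSup (Set.range h) :=
        (show h i < h j by omega).trans_le (le_csSup (Set.finite_range h).bddAbove ⟨j, rfl⟩)
      obtain ⟨_, ⟨k, rfl⟩, hik, hkm⟩ := hh.2 (h i) ⟨i, rfl⟩ hlt
      exact (hS i k ⟨hik.le, hkm⟩).trans (ih (h j - h k) (by omega) k j (by omega) rfl)
  intro i hi j
  rcases le_total (h i) (h j) with hij | hji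
  · exact (climb _ i j hij rfl).1 hi
  · exact (climb _ j i hji rfl).2 hi

theorem CatalanAdmissible.of_isConnectedRel {h : Fin n → ℕ} (h0 : 0 ∈ Set.range h)
    (hconn : IsConnectedRel fun i j => h i ≤ h j ∧ h j ≤ h i + m) : CatalanAdmissible m h := by
  refine ⟨h0, ?_⟩
  rintro _ ⟨i, rfl⟩ hlt
  obtain ⟨_, ⟨j, rfl⟩, hij⟩ :=
    exists_lt_of_lt_csSup (Set.nonempty_of_mem (Set.mem_range_self i)) hlt
  by_contra! hgap
  -- with no value in `(h i, h i + m]`, the values `≤ h i` are cut off from the rest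
  have hcut : ∀ p q, h p ≤ h q ∧ h q ≤ h p + m → (h p ≤ h i ↔ h q ≤ h i) := by
    rintro p q ⟨hpq, hqp⟩
    have := hgap (h q) ⟨q, rfl⟩
    constructor <;> intro <;> omega
  exact not_le.2 hij (hconn {k | h k ≤ h i} hcut i (le_refl (h i)) j)

def diagonalLine (c : Fin n → ℝ) : Set (Fin n → ℝ) :=
  {x | ∀ i j, x i + c i = x j + c j}

theorem diagonalLine_eq_iff {c c' : Fin n → ℝ} :
    diagonalLine c = diagonalLine c' ↔ ∀ i j, c i - c' i = c j - c' j := by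
  constructor
  · intro h i j
    have hc : -c ∈ diagonalLine c' := h ▸ fun i j => by simp
    have := hc i j
    simp only [Pi.neg_apply] at this
    linarith
  · intro h
    ext x
    exact ⟨fun hx i j => by linarith [hx i j, h i j], fun hx i j => by linarith [hx i j, h i j]⟩

theorem diagonalLine_eq_mk' [Nonempty (Fin n)] (c : Fin n → ℝ) :
    diagonalLine c = (AffineSubspace.mk' (-c) (ℝ ∙ (1 : Fin n → ℝ)) : Set (Fin n → ℝ)) := by
  ext x
  rw [SetLike.mem_coe, AffineSubspace.mem_mk', vsub_eq_sub, Submodule.mem_span_singleton]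
  constructor
  · intro hx
    let i₀ := Classical.arbitrary (Fin n)
    refine ⟨x i₀ + c i₀, funext fun j => ?_⟩
    simp only [Pi.sub_apply, Pi.neg_apply, sub_neg_eq_add, Pi.smul_apply, Pi.one_apply,
      smul_eq_mul, mul_one]
    linarith [hx i₀ j]
  · rintro ⟨t, ht⟩ i j
    have hi := congrFun ht i
    have hj := congrFun ht j
    simp only [Pi.sub_apply, Pi.neg_apply, sub_neg_eq_add, Pi.smul_apply, Pi.one_apply,
      smul_eq_mul, mul_one] at hi hj
    linarith

theorem flatDim_diagonalLine [Nonempty (Fin n)] (c : Fin n → ℝ) :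
    flatDim (diagonalLine c) = 1 := by
  rw [flatDim, diagonalLine_eq_mk', AffineSubspace.affineSpan_coe, AffineSubspace.direction_mk',
    finrank_span_singleton one_ne_zero]

theorem hyp_mem_catalanArr {i j : Fin n} {a : ℤ} (hij : i ≠ j) (ha : |a| ≤ m) :
    hyp n i j a ∈ CatalanArr m n := by
  obtain ⟨ha₁, ha₂⟩ := abs_le.1 ha
  rcases hij.lt_or_gt with hlt | hgt
  · exact ⟨i, j, a, hlt, ha₁, ha₂, rfl⟩
  · refine ⟨j, i, -a, hgt, by omega, by omega, ?_⟩
    ext x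
    simp only [hyp, Set.mem_ofPred_eq, Int.cast_neg]
    constructor <;> intro <;> linarith

theorem diagonalLine_mem_flats {h : Fin n → ℕ} (hh : CatalanAdmissible m h) :
    diagonalLine (fun i => (h i : ℝ)) ∈ flats (CatalanArr m n) := by
  refine ⟨⟨fun i => -(h i : ℝ), fun i j => by ring⟩,
    {H ∈ CatalanArr m n | ∃ i j, H = hyp n i j (h j - h i)}, fun _ hH => hH.1, ?_⟩
  apply subset_antisymm
  · rintro x hx H ⟨-, i, j, rfl⟩
    show x i - x j = ((h j - h i : ℤ) : ℝ)
    push_cast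
    linarith [hx i j]
  · intro x hx i j
    refine (IsConnectedRel.of_catalanAdmissible hh).eq (f := fun k => x k + h k) ?_ i j
    rintro p q ⟨hpq, hqp⟩
    rcases eq_or_ne p q with rfl | hne
    · rfl
    have hH := hx _ ⟨hyp_mem_catalanArr hne (abs_le.2 ⟨by omega, by omega⟩), p, q, rfl⟩
    change x p - x q = ((h q - h p : ℤ) : ℝ) at hH
    push_cast at hH
    linarith

theorem eq_of_diagonalLine_eq {h h' : Fin n → ℕ} (h0 : 0 ∈ Set.range h)
    (h0' : 0 ∈ Set.range h')
    (heq : diagonalLine (fun i => (h i : ℝ)) = diagonalLine (fun i => (h' i : ℝ))) :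
    h = h' := by
  obtain ⟨i₀, hi₀⟩ := h0
  obtain ⟨j₀, hj₀⟩ := h0'
  funext k
  have hk₁ := diagonalLine_eq_iff.1 heq k i₀
  have hk₂ := diagonalLine_eq_iff.1 heq k j₀
  simp only [hi₀, hj₀, Nat.cast_zero] at hk₁ hk₂
  have : (h k : ℝ) = h' k := by
    linarith [(h' i₀).cast_nonneg (α := ℝ), (h j₀).cast_nonneg (α := ℝ)]
  exact_mod_cast this

theorem diagonalLine_neg_subset_hyp {x : Fin n → ℝ} {i j : Fin n} {a : ℤ}
    (hx : x ∈ hyp n i j a) : diagonalLine (-x) ⊆ hyp n i j a := by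
  intro y hy
  have := hy i j
  simp only [hyp, Set.mem_ofPred_eq, Pi.neg_apply] at hx this ⊢
  linarith

theorem sInter_eq_diagonalLine [Nonempty (Fin n)] {B : Set (Set (Fin n → ℝ))}
    (hB : B ⊆ CatalanArr m n) {x₀ : Fin n → ℝ} (hx₀ : x₀ ∈ ⋂₀ B)
    (hdim : flatDim (⋂₀ B) = 1) : ⋂₀ B = diagonalLine (-x₀) := by
  have hsub : diagonalLine (-x₀) ⊆ ⋂₀ B := Set.subset_sInter fun H hH => by
    obtain ⟨i, j, a, -, -, -, rfl⟩ := hB hH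
    exact diagonalLine_neg_subset_hyp (hx₀ _ hH)
  refine subset_antisymm ?_ hsub
  rw [diagonalLine_eq_mk'] at hsub ⊢
  refine subset_of_coe_subset_of_finrank_direction_le hsub ⟨x₀, ?_⟩ ?_
  · simp [AffineSubspace.mem_mk']
  · rw [AffineSubspace.direction_mk', finrank_span_singleton one_ne_zero]
    exact hdim.le

theorem isConnectedRel_of_sInter_eq_diagonalLine {B : Set (Set (Fin n → ℝ))}
    (hB : B ⊆ CatalanArr m n) {x₀ : Fin n → ℝ} (hF : ⋂₀ B = diagonalLine (-x₀)) :
    IsConnectedRel fun i j => ∃ a : ℤ, |a| ≤ m ∧ x₀ i - x₀ j = a := by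
  classical
  intro S hS i hi j
  have hx₀ : x₀ ∈ ⋂₀ B := hF ▸ fun i j => by simp
  -- moving `x₀` by the indicator of `S` stays in `⋂₀ B`, hence on the line through `x₀`
  have hv : (x₀ + S.indicator 1 : Fin n → ℝ) ∈ ⋂₀ B := by
    intro H hH
    obtain ⟨p, q, a, -, ha₁, ha₂, rfl⟩ := hB hH
    have hpq : x₀ p - x₀ q = a := hx₀ _ hH
    have hS' := hS p q ⟨a, abs_le.2 ⟨ha₁, ha₂⟩, hpq⟩
    show (x₀ + S.indicator 1 : Fin n → ℝ) p - (x₀ + S.indicator 1 : Fin n → ℝ) q = a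
    by_cases hp : p ∈ S
    · simp [hp, hS'.1 hp, hpq]
    · simp [hp, mt hS'.2 hp, hpq]
  rw [hF] at hv
  by_contra hj
  have := hv i j
  simp [hi, hj] at this

theorem exists_catalanAdmissible_of_mem_Lk_one [Nonempty (Fin n)] {F : Set (Fin n → ℝ)}
    (hF : F ∈ Lk (CatalanArr m n) 1) :
    ∃ h : Fin n → ℕ, CatalanAdmissible m h ∧ diagonalLine (fun i => (h i : ℝ)) = F := by
  obtain ⟨⟨⟨x₀, hx₀⟩, B, hB, rfl⟩, hdim⟩ := hF
  have hline := sInter_eq_diagonalLine hB hx₀ hdim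
  have hconn := isConnectedRel_of_sInter_eq_diagonalLine hB hline
  obtain ⟨i₀, hmax⟩ := Finite.exists_max x₀
  obtain ⟨h, hh⟩ := hconn.exists_nat_eq_sub (fun i j ⟨a, _, ha⟩ => ⟨a, ha⟩) hmax
  refine ⟨h, .of_isConnectedRel ⟨i₀, by exact_mod_cast (hh i₀).trans (sub_self _)⟩ ?_, ?_⟩
  · refine hconn.mono fun i j ⟨a, ha, hij⟩ => ?_
    have hij' : (h j : ℤ) - h i = a := by
      have : (h j : ℝ) - h i = a := by rw [hh, hh, ← hij]; ring
      exact_mod_cast this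
    obtain ⟨ha₁, ha₂⟩ := abs_le.1 ha
    omega
  · rw [hline, diagonalLine_eq_iff]
    intro i j
    simp only [hh, Pi.neg_apply]
    ring

end Catalan

/-- The map `h ↦ {x | x i + h i = x j + h j for all i, j}` is a bijection from the
Catalan-admissible functions onto the `1`-dimensional flats of `C^m_n`. -/
theorem catalan_one_flats_bij (m n : ℕ) (hn : 1 ≤ n) :
    Set.BijOn
      (fun h : Fin n → ℕ =>
        {x : Fin n → ℝ | ∀ i j : Fin n, x i + (h i : ℝ) = x j + (h j : ℝ)})
      {h : Fin n → ℕ | CatalanAdmissible m h}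
      (Lk (CatalanArr m n) 1) := by
  have : Nonempty (Fin n) := ⟨⟨0, hn⟩⟩
  refine ⟨fun h hh => ⟨diagonalLine_mem_flats hh, flatDim_diagonalLine _⟩,
    fun h hh h' hh' heq => eq_of_diagonalLine_eq hh.1 hh'.1 heq,
    fun F hF => exists_catalanAdmissible_of_mem_Lk_one hF⟩
end

section
/- Fix integers m ≥ 1, n ≥ 1 and k ≥ 1. Consider pairs (π, h) where π is a set partition of {1, …, n} into k nonempty blocks and h : {1, …, n} → ℕ is a function such that every block B of π satisfies: 0 ∈ h(B), and for every a ∈ h(B) with a < max h(B), letting b be the smallest element of h(B) greater than a, one has b ≤ a + m, and if b = a + m then min{i ∈ B : h(i) = a} < max{j ∈ B : h(j) = b}. Then the map sending (π, h) to the affine subspace ⋂_{B ∈ π} {x ∈ ℝ^n : x_i + h(i) = x_j + h(j) for all i, j ∈ B} is a bijection from the set of such pairs onto the set L_k(S^m_n) of k-dimensional flats of the extended Shi arrangement S^m_n. -/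
open Set

/-- `π` is a set partition of `{1,…,n}` into `k` nonempty blocks. -/
def IsPartitionInto {n : ℕ} (π : Finset (Finset (Fin n))) (k : ℕ) : Prop :=
  π.card = k ∧ (∀ B ∈ π, B.Nonempty) ∧
    (↑π : Set (Finset (Fin n))).PairwiseDisjoint id ∧ ∀ v : Fin n, ∃ B ∈ π, v ∈ B

/-- The Shi condition on a block `B`: `0 ∈ h(B)`, and for every `a ∈ h(B)` below
`max h(B)`, the least element `b` of `h(B)` greater than `a` satisfies `b ≤ a + m`,
and whenever `b = a + m` the smallest index in `B` attaining `a` is smaller than the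
largest index in `B` attaining `b`. -/
def ShiBlockCond (m : ℕ) {n : ℕ} (h : Fin n → ℕ) (B : Finset (Fin n)) : Prop :=
  0 ∈ h '' ↑B ∧
    ∀ a ∈ h '' ↑B, a < sSup (h '' ↑B) →
      ∀ b, b = sInf {c ∈ h '' ↑B | a < c} →
        b ≤ a + m ∧
          (b = a + m →
            sInf (Fin.val '' {i | i ∈ B ∧ h i = a}) <
              sSup (Fin.val '' {j | j ∈ B ∧ h j = b}))

/-! Every flat `F` of `S^m_n` is cut out by equations `x i + h i = x j + h j` on the classes of
coordinates whose difference is constant on `F`; normalising by `0 ∈ h(B)`, the offset `h i` is how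
far `x i` lies below the top of its block at any point `x ∈ F`. Such a set is a translate of the
space of functions constant on blocks, so its dimension is the number of blocks, and it determines
`π` and `h` (test it against `-h` and `-h + 1_B`).

It is an intersection of Shi hyperplanes exactly when consecutive levels `a < b` of `h` on each
block are linked by a hyperplane `x p - x q = h q - h p` with `p < q` and `1 - m ≤ h q - h p ≤ m`:
that is, `b < a + m`, or `b = a + m` and some index at level `a` precedes one at level `b`.
Conversely, if a flat had a level gap violating this, raising by `1` the coordinates of the block
at levels `≤ a` would stay inside every hyperplane defining `F`, yet it changes a difference that
is constant on `F`. -/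

section SetPartition

variable {α : Type*}

def IsSetPartition (π : Finset (Finset α)) : Prop :=
  (∀ B ∈ π, B.Nonempty) ∧ (↑π : Set (Finset α)).PairwiseDisjoint id ∧ ∀ v : α, ∃ B ∈ π, v ∈ B

def SameBlock (π : Finset (Finset α)) (i j : α) : Prop :=
  ∃ B ∈ π, i ∈ B ∧ j ∈ B

namespace IsSetPartition

variable {π π' : Finset (Finset α)}

theorem eq_of_mem_of_mem (hπ : IsSetPartition π) {B C : Finset α} (hB : B ∈ π) (hC : C ∈ π)
    {i : α} (hiB : i ∈ B) (hiC : i ∈ C) : B = C :=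
  hπ.2.1.elim_finset hB hC i hiB hiC

theorem mem_iff_sameBlock (hπ : IsSetPartition π) {B : Finset α} (hB : B ∈ π) {i j : α}
    (hi : i ∈ B) : j ∈ B ↔ SameBlock π i j :=
  ⟨fun hj => ⟨B, hB, hi, hj⟩, fun ⟨_, hC, hiC, hjC⟩ => hπ.eq_of_mem_of_mem hC hB hiC hi ▸ hjC⟩

theorem mem_iff_mem_of_sameBlock (hπ : IsSetPartition π) {B : Finset α} (hB : B ∈ π) {i j : α}
    (hij : SameBlock π i j) : i ∈ B ↔ j ∈ B :=
  let ⟨C, hC, hiC, hjC⟩ := hij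
  ⟨fun hi => (hπ.mem_iff_sameBlock hB hi).2 hij,
    fun hj => (hπ.mem_iff_sameBlock hB hj).2 ⟨C, hC, hjC, hiC⟩⟩

theorem subset_of_sameBlock_iff (hπ : IsSetPartition π) (hπ' : IsSetPartition π')
    (h : ∀ i j, SameBlock π i j ↔ SameBlock π' i j) : π ⊆ π' := by
  intro B hB
  obtain ⟨i, hi⟩ := hπ.1 B hB
  obtain ⟨C, hC, hiC⟩ := hπ'.2.2 i
  have : B = C := by
    ext j
    rw [hπ.mem_iff_sameBlock hB hi, hπ'.mem_iff_sameBlock hC hiC, h]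
  exact this ▸ hC

theorem eq_of_sameBlock_iff (hπ : IsSetPartition π) (hπ' : IsSetPartition π')
    (h : ∀ i j, SameBlock π i j ↔ SameBlock π' i j) : π = π' :=
  (hπ.subset_of_sameBlock_iff hπ' h).antisymm
    (hπ'.subset_of_sameBlock_iff hπ fun i j => (h i j).symm)

noncomputable def block (hπ : IsSetPartition π) (i : α) : π :=
  ⟨(hπ.2.2 i).choose, (hπ.2.2 i).choose_spec.1⟩

theorem mem_block (hπ : IsSetPartition π) (i : α) : i ∈ (hπ.block i : Finset α) :=
  (hπ.2.2 i).choose_spec.2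

theorem block_eq_iff (hπ : IsSetPartition π) {i : α} {B : π} :
    hπ.block i = B ↔ i ∈ (B : Finset α) :=
  ⟨fun h => h ▸ hπ.mem_block i, fun h =>
    Subtype.ext (hπ.eq_of_mem_of_mem (hπ.block i).2 B.2 (hπ.mem_block i) h)⟩

theorem block_surjective (hπ : IsSetPartition π) : Function.Surjective hπ.block := fun B =>
  let ⟨i, hi⟩ := hπ.1 B B.2
  ⟨i, hπ.block_eq_iff.2 hi⟩

theorem sameBlock_iff (hπ : IsSetPartition π) {i j : α} :
    SameBlock π i j ↔ hπ.block i = hπ.block j := by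
  constructor
  · rintro ⟨B, hB, hi, hj⟩
    rw [hπ.block_eq_iff (B := ⟨B, hB⟩) |>.2 hi, hπ.block_eq_iff (B := ⟨B, hB⟩) |>.2 hj]
  · intro h
    exact ⟨_, (hπ.block j).2, h ▸ hπ.mem_block i, hπ.mem_block j⟩

end IsSetPartition

theorem Finpartition.isSetPartition [Fintype α] [DecidableEq α]
    (P : Finpartition (Finset.univ : Finset α)) : IsSetPartition P.parts :=
  ⟨fun _ => P.nonempty_of_mem_parts, P.disjoint, fun _ => P.exists_mem (Finset.mem_univ _)⟩

theorem Finpartition.sameBlock_ofSetoid_iff [Fintype α] [DecidableEq α] (s : Setoid α)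
    [DecidableRel s.r] {i j : α} : SameBlock (Finpartition.ofSetoid s).parts i j ↔ s i j := by
  rw [SameBlock, ← Finpartition.mem_part_iff_exists, Finpartition.mem_part_ofSetoid_iff_rel]
  exact ⟨s.symm, s.symm⟩

end SetPartition

section BlockFlat

variable {ι : Type*}

def blockFlat (π : Finset (Finset ι)) (c : ι → ℝ) : Set (ι → ℝ) :=
  ⋂ B ∈ π, {x | ∀ i ∈ B, ∀ j ∈ B, x i + c i = x j + c j}

variable {π : Finset (Finset ι)} {c : ι → ℝ} {x : ι → ℝ}

theorem mem_blockFlat :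
    x ∈ blockFlat π c ↔ ∀ B ∈ π, ∀ i ∈ B, ∀ j ∈ B, x i + c i = x j + c j := by
  simp [blockFlat]

theorem neg_mem_blockFlat : -c ∈ blockFlat π c :=
  mem_blockFlat.2 fun _ _ _ _ _ _ => by simp

theorem sub_eq_of_sameBlock {i j : ι} (hij : SameBlock π i j) (hx : x ∈ blockFlat π c) :
    x i - x j = c j - c i := by
  obtain ⟨B, hB, hi, hj⟩ := hij
  linarith [mem_blockFlat.1 hx B hB i hi j hj]

namespace IsSetPartition

theorem mem_blockFlat_iff (hπ : IsSetPartition π) :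
    x ∈ blockFlat π c ↔ ∃ f : π → ℝ, x = fun i => f (hπ.block i) - c i := by
  constructor
  · intro hx
    refine ⟨fun B => x (hπ.1 B B.2).choose + c (hπ.1 B B.2).choose, funext fun i => ?_⟩
    have := mem_blockFlat.1 hx _ (hπ.block i).2 _ (hπ.1 _ (hπ.block i).2).choose_spec i
      (hπ.mem_block i)
    linarith
  · rintro ⟨f, rfl⟩
    refine mem_blockFlat.2 fun B hB i hi j hj => ?_
    rw [hπ.block_eq_iff (B := ⟨B, hB⟩) |>.2 hi, hπ.block_eq_iff (B := ⟨B, hB⟩) |>.2 hj]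
    ring

theorem blockFlat_eq_mk' (hπ : IsSetPartition π) :
    blockFlat π c = AffineSubspace.mk' (-c) (LinearMap.range (LinearMap.funLeft ℝ ℝ hπ.block)) := by
  ext x
  rw [SetLike.mem_coe, AffineSubspace.mem_mk', hπ.mem_blockFlat_iff, LinearMap.mem_range]
  refine exists_congr fun f => ?_
  simp only [funext_iff, vsub_eq_sub, LinearMap.funLeft_apply, sub_neg_eq_add, Pi.add_apply,
    eq_comm (b := f _), eq_sub_iff_add_eq]

theorem finrank_direction_blockFlat [Fintype ι] (hπ : IsSetPartition π) :
    Module.finrank ℝ (affineSpan ℝ (blockFlat π c)).direction = π.card := by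
  rw [hπ.blockFlat_eq_mk', AffineSubspace.affineSpan_coe, AffineSubspace.direction_mk',
    LinearMap.finrank_range_of_inj
      (LinearMap.funLeft_injective_of_surjective ℝ ℝ _ hπ.block_surjective),
    Module.finrank_fintype_fun_eq_card, Fintype.card_coe]

theorem sameBlock_of_forall_sub_eq (hπ : IsSetPartition π) {i j : ι} {a : ℝ}
    (h : ∀ x ∈ blockFlat π c, x i - x j = a) : SameBlock π i j := by
  classical
  have hsub (f : π → ℝ) : f (hπ.block i) - f (hπ.block j) = a + c i - c j := by
    linarith [h _ (hπ.mem_blockFlat_iff.2 ⟨f, rfl⟩)]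
  have := (hsub fun B => if B = hπ.block i then 1 else 0).trans (hsub 0).symm
  rw [hπ.sameBlock_iff]
  by_contra hne
  simp [Ne.symm hne] at this

theorem eq_of_blockFlat_eq {π' : Finset (Finset ι)} {c' : ι → ℝ} (hπ : IsSetPartition π)
    (hπ' : IsSetPartition π') (h : blockFlat π c = blockFlat π' c') : π = π' :=
  hπ.eq_of_sameBlock_iff hπ' fun _ _ =>
    ⟨fun hij => hπ'.sameBlock_of_forall_sub_eq fun _ hx => sub_eq_of_sameBlock hij (h ▸ hx),
      fun hij => hπ.sameBlock_of_forall_sub_eq fun _ hx => sub_eq_of_sameBlock hij (h ▸ hx)⟩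

end IsSetPartition

theorem eq_of_blockFlat_eq_of_zero_mem {h h' : ι → ℕ} (hcov : ∀ v : ι, ∃ B ∈ π, v ∈ B)
    (hz : ∀ B ∈ π, 0 ∈ h '' B) (hz' : ∀ B ∈ π, 0 ∈ h' '' B)
    (heq : blockFlat π (Nat.cast ∘ h) = blockFlat π (Nat.cast ∘ h')) : h = h' := by
  funext i
  obtain ⟨B, hB, hi⟩ := hcov i
  have hx := mem_blockFlat.1 (heq.symm ▸ neg_mem_blockFlat) B hB
  obtain ⟨i₀, hi₀, h₀⟩ := hz B hB
  obtain ⟨i₁, hi₁, h₁⟩ := hz' B hB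
  have e₀ := hx i hi i₀ hi₀
  have e₁ := hx i hi i₁ hi₁
  simp only [Pi.neg_apply, Function.comp_apply, h₀, h₁, Nat.cast_zero] at e₀ e₁
  have : (h i : ℝ) = h' i := by linarith [(h' i₀).cast_nonneg (α := ℝ), (h i₁).cast_nonneg (α := ℝ)]
  exact_mod_cast this

end BlockFlat

section ShiFlat

variable {m n : ℕ} {h : Fin n → ℕ} {B : Finset (Fin n)}

theorem ShiBlockCond.exists_step (hB : ShiBlockCond m h B) {p q : Fin n} (hp : p ∈ B)
    (hq : q ∈ B) (hpq : h p < h q) :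
    ∃ p' ∈ B, ∃ q' ∈ B, h p' = h p ∧ h p < h q' ∧ h q' ≤ h q ∧
      (h q' < h p + m ∨ h q' = h p + m ∧ p' < q') := by
  have hqB : h q ∈ h '' B := ⟨q, hq, rfl⟩
  have hsup : h p < sSup (h '' B) :=
    hpq.trans_le (le_csSup ((B.finite_toSet).image h).bddAbove hqB)
  have hnext : sInf {c ∈ h '' B | h p < c} ∈ {c ∈ h '' B | h p < c} := Nat.sInf_mem ⟨_, hqB, hpq⟩
  have hnext_le : sInf {c ∈ h '' B | h p < c} ≤ h q := Nat.sInf_le ⟨hqB, hpq⟩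
  obtain ⟨hle, hidx⟩ := hB.2 (h p) ⟨p, hp, rfl⟩ hsup _ rfl
  obtain ⟨r, hr, hrb⟩ := hnext.1
  rcases hle.lt_or_eq with hlt | heq
  · exact ⟨p, hp, r, hr, rfl, hrb ▸ hnext.2, hrb ▸ hnext_le, Or.inl (hrb ▸ hlt)⟩
  · obtain ⟨p', ⟨hp', hp'a⟩, hp'v⟩ :=
      Nat.sInf_mem (s := Fin.val '' {i | i ∈ B ∧ h i = h p}) ⟨_, p, ⟨hp, rfl⟩, rfl⟩
    obtain ⟨q', ⟨hq', hq'b⟩, hq'v⟩ :=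
      Set.Nonempty.csSup_mem (s := Fin.val '' {j | j ∈ B ∧ h j = sInf {c ∈ h '' B | h p < c}})
        ⟨_, r, ⟨hr, hrb⟩, rfl⟩ ((Set.toFinite _).image _)
    refine ⟨p', hp', q', hq', hp'a, hq'b ▸ hnext.2, hq'b ▸ hnext_le, Or.inr ⟨hq'b ▸ heq, ?_⟩⟩
    rw [Fin.lt_def, hp'v, hq'v]
    exact hidx heq

theorem shiBlockCond_of_forall_gap (hz : 0 ∈ h '' B)
    (hgap : ∀ i ∈ B, ∀ j ∈ B, h i < h j → (∀ l ∈ B, h i < h l → h j ≤ h l) →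
      h j ≤ h i + m ∧ (h j = h i + m → ∃ p ∈ B, ∃ q ∈ B, h p = h i ∧ h q = h j ∧ p < q)) :
    ShiBlockCond m h B := by
  refine ⟨hz, fun a ha hsup b hb => ?_⟩
  obtain ⟨i, hi, rfl⟩ := ha
  have hmax := Set.Nonempty.csSup_mem (s := h '' B) ⟨_, i, hi, rfl⟩ ((B.finite_toSet).image h)
  obtain ⟨⟨j, hj, rfl⟩, hij⟩ : b ∈ {c ∈ h '' B | h i < c} := hb ▸ Nat.sInf_mem ⟨_, hmax, hsup⟩
  obtain ⟨hle, hidx⟩ := hgap i hi j hj hij fun l hl hil => hb ▸ Nat.sInf_le ⟨⟨l, hl, rfl⟩, hil⟩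
  refine ⟨hle, fun hjm => ?_⟩
  obtain ⟨p, hp, q, hq, hpi, hqj, hpq⟩ := hidx hjm
  calc sInf (Fin.val '' {l | l ∈ B ∧ h l = h i}) ≤ p := Nat.sInf_le ⟨p, ⟨hp, hpi⟩, rfl⟩
    _ < q := hpq
    _ ≤ sSup (Fin.val '' {l | l ∈ B ∧ h l = h j}) :=
      le_csSup ((Set.toFinite _).image _).bddAbove ⟨q, ⟨hq, hqj⟩, rfl⟩

theorem ShiBlockCond.add_eq_add (hm : 1 ≤ m) (hB : ShiBlockCond m h B) {x : Fin n → ℝ}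
    (hx : ∀ p ∈ B, ∀ q ∈ B, p < q → 1 - (m : ℤ) ≤ (h q : ℤ) - h p → (h q : ℤ) - h p ≤ m →
      x p + h p = x q + h q)
    {i j : Fin n} (hi : i ∈ B) (hj : j ∈ B) : x i + h i = x j + h j := by
  have near : ∀ p ∈ B, ∀ q ∈ B, h p ≤ h q → h q < h p + m → x p + h p = x q + h q := by
    intro p hp q hq hle hlt
    rcases lt_trichotomy p q with hpq | rfl | hqp
    · exact hx p hp q hq hpq (by omega) (by omega)
    · rfl
    · exact (hx q hq p hp hqp (by omega) (by omega)).symm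
  have chain : ∀ N : ℕ, ∀ p ∈ B, ∀ q ∈ B, h p ≤ h q → h q ≤ h p + N →
      x p + h p = x q + h q := by
    intro N
    induction N with
    | zero => exact fun p hp q hq hle hN => near p hp q hq hle (by omega)
    | succ N ih =>
      intro p hp q hq hle hN
      rcases hle.eq_or_lt with heq | hlt
      · exact near p hp q hq hle (by omega)
      obtain ⟨p', hp', q', hq', hp'p, hpq', hq'q, hstep⟩ := hB.exists_step hp hq hlt
      have e₁ := near p hp p' hp' hp'p.ge (by omega)
      have e₂ : x p' + h p' = x q' + h q' := by
        rcases hstep with hlt' | ⟨heq', hlt'⟩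
        · exact near p' hp' q' hq' (by omega) (by omega)
        · exact hx p' hp' q' hq' hlt' (by omega) (by omega)
      exact e₁.trans (e₂.trans (ih q' hq' q hq hq'q (by omega)))
  rcases le_total (h i) (h j) with hle | hle
  · exact chain _ i hi j hj hle le_add_tsub
  · exact (chain _ j hj i hi hle le_add_tsub).symm

theorem blockFlat_mem_flats (hm : 1 ≤ m) {π : Finset (Finset (Fin n))}
    (hπ : ∀ B ∈ π, ShiBlockCond m h B) : blockFlat π (Nat.cast ∘ h) ∈ flats (ShiArr m n) := by
  refine ⟨⟨_, neg_mem_blockFlat⟩, {H | H ∈ ShiArr m n ∧ blockFlat π (Nat.cast ∘ h) ⊆ H},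
    fun _ hH => hH.1, subset_antisymm (fun x hx H hH => hH.2 hx) fun x hx => ?_⟩
  refine mem_blockFlat.2 fun B hB i hi j hj => (hπ B hB).add_eq_add hm ?_ hi hj
  intro p hp q hq hpq hlow hhigh
  have hsub : blockFlat π (Nat.cast ∘ h) ⊆ hyp n p q ((h q : ℤ) - h p) := fun y hy => by
    simp [hyp, sub_eq_of_sameBlock ⟨B, hB, hp, hq⟩ hy]
  have : x p - x q = (h q : ℝ) - h p := by
    simpa [hyp] using hx _ ⟨⟨p, q, _, hlow, hhigh, hpq, rfl⟩, hsub⟩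
  linarith

end ShiFlat

section Surjectivity

def DiffConst {ι : Type*} (F : Set (ι → ℝ)) (i j : ι) : Prop :=
  ∃ a : ℤ, ∀ x ∈ F, x i - x j = a

def diffSetoid {ι : Type*} (F : Set (ι → ℝ)) : Setoid ι where
  r := DiffConst F
  iseqv :=
    ⟨fun _ => ⟨0, fun x _ => by simp⟩,
      fun ⟨a, ha⟩ => ⟨-a, fun x hx => by push_cast; linarith [ha x hx]⟩,
      fun ⟨a, ha⟩ ⟨b, hb⟩ => ⟨a + b, fun x hx => by push_cast; linarith [ha x hx, hb x hx]⟩⟩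

theorem IsSetPartition.exists_mem_blockFlat_of_sub_int {ι : Type*} {π : Finset (Finset ι)}
    (hπ : IsSetPartition π) {x₀ : ι → ℝ} (hx₀ : ∀ i j, SameBlock π i j → ∃ a : ℤ, x₀ i - x₀ j = a) :
    ∃ h : ι → ℕ, (∀ B ∈ π, 0 ∈ h '' B) ∧ x₀ ∈ blockFlat π (Nat.cast ∘ h) := by
  choose top htop htop_max using fun B : π => B.1.exists_max_image x₀ (hπ.1 B B.2)
  obtain ⟨h, hh⟩ : ∃ h : ι → ℕ, ∀ i, (h i : ℝ) = x₀ (top (hπ.block i)) - x₀ i := by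
    refine ⟨fun i => ⌊x₀ (top (hπ.block i)) - x₀ i⌋.toNat, fun i => ?_⟩
    dsimp only
    obtain ⟨a, ha⟩ := hx₀ _ i ⟨_, (hπ.block i).2, htop _, hπ.mem_block i⟩
    have : (0 : ℝ) ≤ a := ha ▸ sub_nonneg.2 (htop_max _ i (hπ.mem_block i))
    rw [ha, Int.floor_intCast]
    exact_mod_cast Int.toNat_of_nonneg (by exact_mod_cast this)
  refine ⟨h, fun B hB => ⟨top ⟨B, hB⟩, htop _, ?_⟩, mem_blockFlat.2 fun B hB i hi j hj => ?_⟩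
  · have hblock : hπ.block (top ⟨B, hB⟩) = ⟨B, hB⟩ := hπ.block_eq_iff.2 (htop _)
    have : (h (top ⟨B, hB⟩) : ℝ) = 0 := by rw [hh, hblock, sub_self]
    exact_mod_cast this
  · simp only [Function.comp_apply, hh, hπ.block_eq_iff (B := ⟨B, hB⟩) |>.2 hi,
      hπ.block_eq_iff (B := ⟨B, hB⟩) |>.2 hj]
    ring

variable {m n : ℕ} {Bs : Set (Set (Fin n → ℝ))} {x₀ : Fin n → ℝ}

theorem sInter_eq_blockFlat (hBs : ∀ H ∈ Bs, ∃ p q a, H = hyp n p q a)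
    {π : Finset (Finset (Fin n))} (hπ : ∀ i j, SameBlock π i j ↔ DiffConst (⋂₀ Bs) i j)
    {c : Fin n → ℝ} (hx₀F : x₀ ∈ ⋂₀ Bs) (hx₀ : x₀ ∈ blockFlat π c) : ⋂₀ Bs = blockFlat π c := by
  ext x
  constructor
  · intro hx
    refine mem_blockFlat.2 fun B hB i hi j hj => ?_
    obtain ⟨a, ha⟩ := (hπ i j).1 ⟨B, hB, hi, hj⟩
    linarith [ha x hx, ha x₀ hx₀F, mem_blockFlat.1 hx₀ B hB i hi j hj]
  · intro hx H hH
    obtain ⟨p, q, a, rfl⟩ := hBs H hH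
    have hpq := (hπ p q).2 ⟨a, fun y hy => hy _ hH⟩
    have : x₀ p - x₀ q = a := hx₀F _ hH
    show x p - x q = a
    linarith [sub_eq_of_sameBlock hpq hx, sub_eq_of_sameBlock hpq hx₀]

theorem exists_shiArr_mem_separating (hBs : Bs ⊆ ShiArr m n) (hx₀ : x₀ ∈ ⋂₀ Bs) {S : Set (Fin n)}
    {i j : Fin n} (hi : i ∈ S) (hj : j ∉ S) (hij : DiffConst (⋂₀ Bs) i j) :
    ∃ p q : Fin n, ∃ α : ℤ, 1 - (m : ℤ) ≤ α ∧ α ≤ m ∧ p < q ∧ hyp n p q α ∈ Bs ∧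
      ¬(p ∈ S ↔ q ∈ S) := by
  classical
  set y : Fin n → ℝ := x₀ + S.indicator 1
  have hy : y ∉ ⋂₀ Bs := fun hy => by
    obtain ⟨a, ha⟩ := hij
    have := (ha y hy).trans (ha x₀ hx₀).symm
    simp [y, Set.indicator_of_mem hi, Set.indicator_of_notMem hj] at this
  simp only [Set.mem_sInter, not_forall] at hy
  obtain ⟨H, hH, hyH⟩ := hy
  obtain ⟨p, q, α, hlow, hhigh, hpq, rfl⟩ := hBs hH
  refine ⟨p, q, α, hlow, hhigh, hpq, hH, fun hS => hyH ?_⟩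
  have hind : S.indicator (1 : Fin n → ℝ) p = S.indicator 1 q := by
    by_cases hp : p ∈ S
    · simp [Set.indicator_of_mem hp, Set.indicator_of_mem (hS.1 hp)]
    · simp [Set.indicator_of_notMem hp, Set.indicator_of_notMem (mt hS.2 hp)]
  have : x₀ p - x₀ q = α := hx₀ _ hH
  show y p - y q = α
  simp only [y, Pi.add_apply, hind]
  linarith

theorem shiBlockCond_of_diffConst_blocks (hBs : Bs ⊆ ShiArr m n) {π : Finset (Finset (Fin n))}
    (hπ : IsSetPartition π) (hπF : ∀ i j, SameBlock π i j ↔ DiffConst (⋂₀ Bs) i j)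
    {h : Fin n → ℕ} (hz : ∀ B ∈ π, 0 ∈ h '' B) (hx₀F : x₀ ∈ ⋂₀ Bs)
    (hx₀ : x₀ ∈ blockFlat π (Nat.cast ∘ h)) {B : Finset (Fin n)} (hB : B ∈ π) :
    ShiBlockCond m h B := by
  refine shiBlockCond_of_forall_gap (hz B hB) fun i hi j hj hij hnext => ?_
  obtain ⟨p, q, α, hlow, hhigh, hpq, hH, hsep⟩ :=
    exists_shiArr_mem_separating (S := {l | l ∈ B ∧ h l ≤ h i}) hBs hx₀F ⟨hi, le_rfl⟩
      (fun hj' => hij.not_ge hj'.2) ((hπF i j).1 ⟨B, hB, hi, hj⟩)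
  have hpq' : SameBlock π p q := (hπF p q).2 ⟨α, fun y hy => hy _ hH⟩
  have hpB : p ∈ B := by
    by_contra hp
    have hq := (hπ.mem_iff_mem_of_sameBlock hB hpq').not.1 hp
    exact hsep (by simp [hp, hq])
  have hqB : q ∈ B := (hπ.mem_iff_mem_of_sameBlock hB hpq').1 hpB
  have hα : α = (h q : ℤ) - h p := by
    have : (α : ℝ) = h q - h p := (hx₀F _ hH).symm.trans (sub_eq_of_sameBlock hpq' hx₀)
    exact_mod_cast this
  have hsep' : ¬(h p ≤ h i ↔ h q ≤ h i) := by simpa [hpB, hqB] using hsep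
  by_cases hpi : h p ≤ h i
  · have := hnext q hqB (by omega)
    exact ⟨by omega, fun _ => ⟨p, hpB, q, hqB, by omega, by omega, hpq⟩⟩
  · have := hnext p hpB (by omega)
    exact ⟨by omega, fun _ => by omega⟩

theorem exists_blockFlat_eq {F : Set (Fin n → ℝ)} (hF : F ∈ flats (ShiArr m n)) :
    ∃ π : Finset (Finset (Fin n)), ∃ h : Fin n → ℕ, IsSetPartition π ∧
      (∀ B ∈ π, ShiBlockCond m h B) ∧ blockFlat π (Nat.cast ∘ h) = F := by
  classical
  obtain ⟨⟨x₀, hx₀F⟩, Bs, hBs, rfl⟩ := hF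
  set P := Finpartition.ofSetoid (diffSetoid (⋂₀ Bs))
  have hπF (i j : Fin n) : SameBlock P.parts i j ↔ DiffConst (⋂₀ Bs) i j :=
    Finpartition.sameBlock_ofSetoid_iff _
  obtain ⟨h, hz, hx₀⟩ := P.isSetPartition.exists_mem_blockFlat_of_sub_int fun i j hij =>
    let ⟨a, ha⟩ := (hπF i j).1 hij
    ⟨a, ha x₀ hx₀F⟩
  refine ⟨P.parts, h, P.isSetPartition, fun B hB =>
    shiBlockCond_of_diffConst_blocks hBs P.isSetPartition hπF hz hx₀F hx₀ hB, ?_⟩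
  refine (sInter_eq_blockFlat (fun H hH => ?_) hπF hx₀F hx₀).symm
  obtain ⟨p, q, a, -, -, -, rfl⟩ := hBs hH
  exact ⟨p, q, a, rfl⟩

end Surjectivity

theorem shi_flats_bij_general (m n k : ℕ) (hm : 1 ≤ m) :
    Set.BijOn
      (fun p : Finset (Finset (Fin n)) × (Fin n → ℕ) =>
        ⋂ B ∈ p.1, {x : Fin n → ℝ |
          ∀ i ∈ B, ∀ j ∈ B, x i + (p.2 i : ℝ) = x j + (p.2 j : ℝ)})
      {p : Finset (Finset (Fin n)) × (Fin n → ℕ) |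
        IsPartitionInto p.1 k ∧ ∀ B ∈ p.1, ShiBlockCond m p.2 B}
      (Lk (ShiArr m n) k) := by
  refine ⟨?_, ?_, ?_⟩
  · rintro ⟨π, h⟩ ⟨⟨hcard, hπ⟩, hshi⟩
    exact ⟨blockFlat_mem_flats hm hshi,
      hcard ▸ IsSetPartition.finrank_direction_blockFlat (π := π) hπ⟩
  · rintro ⟨π, h⟩ ⟨⟨-, hπ⟩, hshi⟩ ⟨π', h'⟩ ⟨⟨-, hπ'⟩, hshi'⟩ heq
    obtain rfl : π = π' := IsSetPartition.eq_of_blockFlat_eq hπ hπ' heq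
    exact Prod.ext rfl (eq_of_blockFlat_eq_of_zero_mem hπ.2.2 (fun B hB => (hshi B hB).1)
      (fun B hB => (hshi' B hB).1) heq)
  · rintro F ⟨hF, hdim⟩
    obtain ⟨π, h, hπ, hshi, rfl⟩ := exists_blockFlat_eq hF
    exact ⟨(π, h), ⟨⟨hπ.finrank_direction_blockFlat.symm.trans hdim, hπ⟩, hshi⟩, rfl⟩

/-- The map `(π, h) ↦ ⋂_{B ∈ π} {x | x i + h i = x j + h j for all i, j ∈ B}` is a
bijection from the pairs of a partition of `{1,…,n}` into `k` blocks and a function `h`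
satisfying the Shi condition on each block, onto the `k`-dimensional flats of `S^m_n`. -/
theorem shi_flats_bij (m n k : ℕ) (hm : 1 ≤ m) (hn : 1 ≤ n) (hk : 1 ≤ k) :
    Set.BijOn
      (fun p : Finset (Finset (Fin n)) × (Fin n → ℕ) =>
        ⋂ B ∈ p.1, {x : Fin n → ℝ |
          ∀ i ∈ B, ∀ j ∈ B, x i + (p.2 i : ℝ) = x j + (p.2 j : ℝ)})
      {p : Finset (Finset (Fin n)) × (Fin n → ℕ) |
        IsPartitionInto p.1 k ∧ ∀ B ∈ p.1, ShiBlockCond m p.2 B}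
      (Lk (ShiArr m n) k) :=
  shi_flats_bij_general m n k hm
end
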